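/- arXiv:2411.14889 — 9 statements merged into one kernel-verified Lean document; each statement's English description precedes it below -/
import Mathlib

section
/- Let r ≥ 2 and let G be an r-regular graph. A set S ⊆ V(G) is an r-percolating set of G if and only if S is a vertex cover of G. Consequently, m(G,r) = β(G) = n(G) − α(G). -/
open SimpleGraph Set

variable {V : Type*}

/-- One step of the (p,q)-spreading color change rule: a white vertex `w` with at least `p`
blue neighbors, at least one of which has at most `q` white neighbors, becomes blue. -/
def spreadStep (G : SimpleGraph V) (p : ℕ) (q : ℕ∞) (B : Set V) : Set V :=
  B ∪ {w | p ≤ (G.neighborSet w ∩ B).ncard ∧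
      ∃ u ∈ G.neighborSet w ∩ B, ((G.neighborSet u \ B).ncard : ℕ∞) ≤ q}

/-- `S` is a (p,q)-spreading set if iterating the rule eventually colors all vertices blue. -/
def IsSpreadingSet (G : SimpleGraph V) (p : ℕ) (q : ℕ∞) (S : Set V) : Prop :=
  ∃ n : ℕ, (spreadStep G p q)^[n] S = Set.univ

/-- The (p,q)-spreading number σ_{(p,q)}(G). -/
noncomputable def spreadNumber (G : SimpleGraph V) (p : ℕ) (q : ℕ∞) : ℕ :=
  sInf {k | ∃ S : Set V, S.ncard = k ∧ IsSpreadingSet G p q S}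

/-- One step of r-neighbor bootstrap percolation. -/
def percStep (G : SimpleGraph V) (r : ℕ) (B : Set V) : Set V :=
  B ∪ {w | r ≤ (G.neighborSet w ∩ B).ncard}

/-- `S` is an r-percolating set of `G`. -/
def IsPercolating (G : SimpleGraph V) (r : ℕ) (S : Set V) : Prop :=
  ∃ n : ℕ, (percStep G r)^[n] S = Set.univ

/-- The r-percolation number m(G,r). -/
noncomputable def percNumber (G : SimpleGraph V) (r : ℕ) : ℕ :=
  sInf {k | ∃ S : Set V, S.ncard = k ∧ IsPercolating G r S}

/-- A vertex cover of `G`. -/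
def IsVertexCover (G : SimpleGraph V) (C : Set V) : Prop :=
  ∀ ⦃u v : V⦄, G.Adj u v → u ∈ C ∨ v ∈ C

/-- The vertex cover number β(G). -/
noncomputable def coverNumber (G : SimpleGraph V) : ℕ :=
  sInf {k | ∃ C : Set V, C.ncard = k ∧ _root_.IsVertexCover G C}

/-- An independent set of `G`. -/
def IsIndep (G : SimpleGraph V) (I : Set V) : Prop :=
  I.Pairwise fun u v => ¬ G.Adj u v

/-- The independence number α(G). -/
noncomputable def indepNumber (G : SimpleGraph V) : ℕ :=
  sSup {k | ∃ I : Set V, I.ncard = k ∧ IsIndep G I}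

/-- `G` has no induced `K_{1,3}`. -/
def ClawFree (G : SimpleGraph V) : Prop :=
  ¬ ∃ v a b c : V, a ≠ b ∧ a ≠ c ∧ b ≠ c ∧
    G.Adj v a ∧ G.Adj v b ∧ G.Adj v c ∧ ¬ G.Adj a b ∧ ¬ G.Adj a c ∧ ¬ G.Adj b c

/-- The set `T` is (the vertex set of) a triangle of `G`. -/
def IsTriangle (G : SimpleGraph V) (T : Set V) : Prop :=
  ∃ a b c : V, a ≠ b ∧ a ≠ c ∧ b ≠ c ∧
    G.Adj a b ∧ G.Adj a c ∧ G.Adj b c ∧ T = {a, b, c}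

/-- The set `D` induces a diamond (`K_4` minus the edge `ab`) in `G`. -/
def IsDiamond (G : SimpleGraph V) (D : Set V) : Prop :=
  ∃ a b c d : V, a ≠ b ∧ a ≠ c ∧ a ≠ d ∧ b ≠ c ∧ b ≠ d ∧ c ≠ d ∧
    ¬ G.Adj a b ∧ G.Adj a c ∧ G.Adj a d ∧ G.Adj b c ∧ G.Adj b d ∧ G.Adj c d ∧
    D = {a, b, c, d}

/-- `P` is a partition of the vertex set of `G` into sets each inducing a triangle
or a diamond (a triangle-diamond partition). -/
def IsTDPartition (G : SimpleGraph V) (P : Set (Set V)) : Prop :=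
  (∀ S ∈ P, IsTriangle G S ∨ IsDiamond G S) ∧ ∀ v : V, ∃! S : Set V, S ∈ P ∧ v ∈ S

/-- The diamond-necklace `N_k`: the vertex `(i, 0)` is `a_i`, `(i, 1)` is `b_i`,
`(i, 2)` is `c_i`, `(i, 3)` is `d_i`; inside each diamond all edges except `a_i b_i`
are present, and consecutive diamonds are linked by the edges `a_i b_{i+1}`. -/
def diamondNecklace (k : ℕ) : SimpleGraph (ZMod k × Fin 4) :=
  SimpleGraph.fromRel (fun x y =>
    (x.1 = y.1 ∧ ¬ (x.2 = 0 ∧ y.2 = 1) ∧ ¬ (x.2 = 1 ∧ y.2 = 0))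
    ∨ (y.1 = x.1 + 1 ∧ x.2 = 0 ∧ y.2 = 1))

/-- The triangle-necklace `F_{2k}`: the vertex `(j, 0)` is `x_{j+1}`, `(j, 1)` is `y_{j+1}`,
`(j, 2)` is `z_{j+1}`; each triple `{x,y,z}` with the same first coordinate is a triangle,
and the triangles are linked by the edges `x_{2i-1}x_{2i}`, `y_{2i-1}y_{2i}` and
`z_{2i}z_{2i+1}` (indices modulo `2k`). -/
def triangleNecklace (k : ℕ) : SimpleGraph (ZMod (2 * k) × Fin 3) :=
  SimpleGraph.fromRel (fun x y =>
    (x.1 = y.1 ∧ x.2 ≠ y.2)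
    ∨ (y.1 = x.1 + 1 ∧ Even x.1.val ∧ ((x.2 = 0 ∧ y.2 = 0) ∨ (x.2 = 1 ∧ y.2 = 1)))
    ∨ (y.1 = x.1 + 1 ∧ Odd x.1.val ∧ x.2 = 2 ∧ y.2 = 2))

/-! In an `r`-regular graph a white vertex with a white neighbour has fewer than `r` blue
neighbours, so an edge with both ends white is never coloured: a percolating set must be a
vertex cover. Conversely, from a vertex cover every white vertex has all its `r` neighbours blue
and turns blue in one step. The formula for β is Gallai's: complements of vertex covers are
exactly the independent sets. -/

namespace SimpleGraph

variable {G : SimpleGraph V} {r : ℕ}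

theorem notMem_percStep_of_adj {B : Set V} {w x : V} (hwx : G.Adj w x) (hw : w ∉ B) (hx : x ∉ B)
    (hfin : (G.neighborSet w).Finite) (hdeg : (G.neighborSet w).ncard ≤ r) :
    w ∉ percStep G r B := by
  have hlt : (G.neighborSet w ∩ B).ncard < (G.neighborSet w).ncard :=
    Set.ncard_lt_ncard ⟨Set.inter_subset_left, fun h => hx (h hwx).2⟩ hfin
  simp only [percStep, Set.mem_union, Set.mem_ofPred_eq, not_or, not_le]
  exact ⟨hw, hlt.trans_le hdeg⟩

theorem isVertexCover_of_percStep (hfin : ∀ v, (G.neighborSet v).Finite)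
    (hdeg : ∀ v, (G.neighborSet v).ncard ≤ r) {B : Set V}
    (hB : _root_.IsVertexCover G (percStep G r B)) : _root_.IsVertexCover G B := by
  intro u v huv
  by_contra! h
  rcases hB huv with hu | hv
  · exact notMem_percStep_of_adj huv h.1 h.2 (hfin u) (hdeg u) hu
  · exact notMem_percStep_of_adj huv.symm h.2 h.1 (hfin v) (hdeg v) hv

theorem isVertexCover_of_isPercolating (hfin : ∀ v, (G.neighborSet v).Finite)
    (hdeg : ∀ v, (G.neighborSet v).ncard ≤ r) {S : Set V} (hS : IsPercolating G r S) :
    _root_.IsVertexCover G S := by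
  obtain ⟨n, hn⟩ := hS
  induction n generalizing S with
  | zero =>
    rw [Function.iterate_zero_apply] at hn
    exact hn ▸ fun u _ _ => Or.inl (Set.mem_univ u)
  | succ n ih => exact isVertexCover_of_percStep hfin hdeg (ih hn)

theorem percStep_eq_univ_of_isVertexCover (hdeg : ∀ v, r ≤ (G.neighborSet v).ncard) {S : Set V}
    (hS : _root_.IsVertexCover G S) : percStep G r S = Set.univ := by
  refine Set.eq_univ_of_forall fun w => ?_
  by_cases hw : w ∈ S
  · exact Or.inl hw
  · have hN : G.neighborSet w ⊆ S := fun x hx => (hS hx).resolve_left hw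
    exact Or.inr (by rw [Set.mem_ofPred_eq, Set.inter_eq_self_of_subset_left hN]; exact hdeg w)

theorem isPercolating_iff_isVertexCover [Finite V] (hreg : ∀ v, (G.neighborSet v).ncard = r)
    (S : Set V) : IsPercolating G r S ↔ _root_.IsVertexCover G S :=
  ⟨isVertexCover_of_isPercolating (fun _ => Set.toFinite _) (fun v => (hreg v).le),
    fun hS => ⟨1, percStep_eq_univ_of_isVertexCover (fun v => (hreg v).ge) hS⟩⟩

theorem isVertexCover_iff_isIndep_compl {C : Set V} :
    _root_.IsVertexCover G C ↔ IsIndep G Cᶜ := by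
  refine ⟨fun h u hu v hv _ huv => (h huv).elim hu hv, fun h u v huv => ?_⟩
  by_contra! hC
  exact h hC.1 hC.2 huv.ne huv

theorem coverNumber_le {C : Set V} (hC : _root_.IsVertexCover G C) : coverNumber G ≤ C.ncard :=
  Nat.sInf_le ⟨C, rfl, hC⟩

theorem exists_isVertexCover_ncard_eq_coverNumber (G : SimpleGraph V) :
    ∃ C : Set V, C.ncard = coverNumber G ∧ _root_.IsVertexCover G C :=
  Nat.sInf_mem (s := {k | ∃ C : Set V, C.ncard = k ∧ _root_.IsVertexCover G C})
    ⟨_, Set.univ, rfl, fun u _ _ => Or.inl (Set.mem_univ u)⟩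

theorem bddAbove_indepNumber_set [Finite V] (G : SimpleGraph V) :
    BddAbove {k | ∃ I : Set V, I.ncard = k ∧ IsIndep G I} :=
  ⟨Nat.card V, by rintro _ ⟨I, rfl, -⟩; exact Set.ncard_le_card I⟩

theorem le_indepNumber [Finite V] {I : Set V} (hI : IsIndep G I) : I.ncard ≤ indepNumber G :=
  le_csSup (bddAbove_indepNumber_set G) ⟨I, rfl, hI⟩

theorem exists_isIndep_ncard_eq_indepNumber [Finite V] (G : SimpleGraph V) :
    ∃ I : Set V, I.ncard = indepNumber G ∧ IsIndep G I :=
  Nat.sSup_mem (s := {k | ∃ I : Set V, I.ncard = k ∧ IsIndep G I})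
    ⟨0, ∅, Set.ncard_empty V, Set.pairwise_empty _⟩
    (bddAbove_indepNumber_set G)

theorem coverNumber_add_indepNumber [Finite V] (G : SimpleGraph V) :
    coverNumber G + indepNumber G = Nat.card V := by
  obtain ⟨C, hCβ, hC⟩ := exists_isVertexCover_ncard_eq_coverNumber G
  obtain ⟨I, hIα, hI⟩ := exists_isIndep_ncard_eq_indepNumber G
  have hβ : coverNumber G ≤ Iᶜ.ncard :=
    coverNumber_le (isVertexCover_iff_isIndep_compl.mpr (by rwa [compl_compl]))
  have hα : Cᶜ.ncard ≤ indepNumber G := le_indepNumber (isVertexCover_iff_isIndep_compl.mp hC)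
  have hC' := Set.ncard_add_ncard_compl C
  have hI' := Set.ncard_add_ncard_compl I
  omega

end SimpleGraph

theorem stmt0_general {V : Type*} [Fintype V] (G : SimpleGraph V) (r : ℕ)
    (hreg : ∀ v : V, (G.neighborSet v).ncard = r) :
    (∀ S : Set V, IsPercolating G r S ↔ _root_.IsVertexCover G S) ∧
    percNumber G r = coverNumber G ∧
    coverNumber G = Fintype.card V - indepNumber G := by
  have hiff := isPercolating_iff_isVertexCover hreg
  refine ⟨hiff, ?_, ?_⟩
  · simp only [percNumber, coverNumber, hiff]
  · have := coverNumber_add_indepNumber G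
    rw [Nat.card_eq_fintype_card] at this
    omega

theorem stmt0 {V : Type*} [Fintype V] (G : SimpleGraph V) (r : ℕ) (hr : 2 ≤ r)
    (hreg : ∀ v : V, (G.neighborSet v).ncard = r) :
    (∀ S : Set V, IsPercolating G r S ↔ _root_.IsVertexCover G S) ∧
    percNumber G r = coverNumber G ∧
    coverNumber G = Fintype.card V - indepNumber G :=
  stmt0_general G r hreg
end

section
/- If G is a claw-free graph on n vertices with minimum degree δ, then α(G) ≤ 2n/(δ + 2). -/
open SimpleGraph Set

variable {V : Type*}

/-! An independent set `I` of a claw-free graph meets every neighbourhood in at most two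
vertices, while each vertex of `I` sends all of its at least `δ` edges out of `I`. Counting the
edges between `I` and its complement from both sides gives `δ |I| ≤ 2 (n - |I|)`. -/

open Finset in
theorem ClawFree.card_filter_adj_le_two {G : SimpleGraph V} [DecidableRel G.Adj]
    (hcf : ClawFree G) {s : Finset V} (hs : IsIndep G s) (u : V) :
    #{v ∈ s | G.Adj v u} ≤ 2 := by
  classical
  by_contra! h
  obtain ⟨t, hts, htc⟩ := exists_subset_card_eq h
  obtain ⟨a, b, c, hab, hac, hbc, rfl⟩ := card_eq_three.mp htc
  have mem : ∀ x ∈ ({a, b, c} : Finset V), x ∈ s ∧ G.Adj x u := fun x hx =>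
    mem_filter.mp (hts hx)
  obtain ⟨ha, hua⟩ := mem a (by simp)
  obtain ⟨hb, hub⟩ := mem b (by simp)
  obtain ⟨hc, huc⟩ := mem c (by simp)
  exact hcf ⟨u, a, b, c, hab, hac, hbc, hua.symm, hub.symm, huc.symm,
    hs ha hb hab, hs ha hc hac, hs hb hc hbc⟩

open Finset in
theorem IsIndep.card_mul_minDegree_add_le [Fintype V] {G : SimpleGraph V} [DecidableRel G.Adj]
    {s : Finset V} (hs : IsIndep G s) {k : ℕ} (hk : ∀ u ∉ s, #{v ∈ s | G.Adj v u} ≤ k) :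
    #s * (G.minDegree + k) ≤ Fintype.card V * k := by
  classical
  have hout : ∀ v ∈ s, G.minDegree ≤ #(sᶜ.bipartiteAbove G.Adj v) := fun v hv =>
    (G.minDegree_le_degree v).trans <| card_le_card fun w hw => by
      have hvw := (G.mem_neighborFinset v w).mp hw
      refine mem_filter.mpr ⟨mem_compl.mpr fun hws => ?_, hvw⟩
      exact hs hv hws (G.ne_of_adj hvw) hvw
  have hin : ∀ u ∈ sᶜ, #(s.bipartiteBelow G.Adj u) ≤ k := fun u hu =>
    hk u (mem_compl.mp hu)
  have hcount := card_mul_le_card_mul G.Adj hout hin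
  rw [card_compl] at hcount
  have hsn : #s ≤ Fintype.card V := card_le_univ s
  calc #s * (G.minDegree + k) = #s * G.minDegree + #s * k := mul_add _ _ _
    _ ≤ (Fintype.card V - #s) * k + #s * k := by gcongr
    _ = Fintype.card V * k := by rw [← add_mul, Nat.sub_add_cancel hsn]

theorem exists_finset_isIndep_card_eq_indepNumber [Finite V] (G : SimpleGraph V) :
    ∃ s : Finset V, IsIndep G s ∧ s.card = indepNumber G := by
  have hmem : indepNumber G ∈ {k | ∃ I : Set V, I.ncard = k ∧ IsIndep G I} := by
    refine Nat.sSup_mem ⟨0, ∅, by simp, by simp [IsIndep]⟩ ⟨Nat.card V, ?_⟩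
    rintro _ ⟨I, rfl, -⟩
    exact Set.ncard_le_card I
  obtain ⟨I, hIcard, hI⟩ := hmem
  refine ⟨I.toFinite.toFinset, by simpa using hI, ?_⟩
  rw [← hIcard, Set.ncard_eq_toFinset_card]

theorem stmt3 {V : Type*} [Fintype V] (G : SimpleGraph V) [DecidableRel G.Adj]
    (hcf : ClawFree G) :
    (indepNumber G : ℝ) ≤ 2 * (Fintype.card V : ℝ) / ((G.minDegree : ℝ) + 2) := by
  obtain ⟨s, hs, hcard⟩ := exists_finset_isIndep_card_eq_indepNumber G
  have hcount : s.card * (G.minDegree + 2) ≤ Fintype.card V * 2 :=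
    hs.card_mul_minDegree_add_le fun u _ => hcf.card_filter_adj_le_two hs u
  rw [le_div_iff₀ (by positivity), ← hcard]
  exact_mod_cast (by linarith : s.card * (G.minDegree + 2) ≤ 2 * Fintype.card V)
end

section
/- If G ≠ K_4 is a connected, claw-free, cubic graph of order n, then n/3 ≤ α(G) ≤ 2n/5. -/
open SimpleGraph Set

variable {V : Type*}

/-!
Upper bound: each vertex of an independent set `I` has three neighbours outside `I`, while by
claw-freeness each vertex outside `I` has at most two neighbours in `I`, so `3|I| ≤ 2(n - |I|)`.

Lower bound: in a connected graph of maximum degree three, every vertex set `s` missing some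
vertex contains an independent set of size at least `|s|/3`: greedily pick a vertex of `s` with a
neighbour outside `s`, which has at most two neighbours inside. Starting from an independent set
`I₀` whose closed neighbourhood has `3|I₀| + r` vertices this gives `n ≤ 3α + r`. A single vertex
gives `n ≤ 3α + 1`, and two non-adjacent vertices with two common neighbours give `n ≤ 3α`. If
there is no such pair then, as `G ≠ K₄`, no two vertices have two common neighbours; hence every
vertex lies in exactly one triangle, `3 ∣ n`, and `n ≤ 3α + 1` improves to `n ≤ 3α`.
-/

open Finset

namespace SimpleGraph

variable {G : SimpleGraph V}

theorem Connected.exists_adj_mem_notMem (hG : G.Connected) {s : Set V} {x y : V}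
    (hx : x ∈ s) (hy : y ∉ s) : ∃ a ∈ s, ∃ b ∉ s, G.Adj a b := by
  obtain ⟨p⟩ := hG.preconnected x y
  obtain ⟨d, -, hd₁, hd₂⟩ := p.exists_boundary_dart s hx hy
  exact ⟨_, hd₁, _, hd₂, d.adj⟩

section

variable [Fintype V] [DecidableEq V]

theorem Connected.eq_univ_of_adj_closed (hG : G.Connected) {s : Finset V} (hs : s.Nonempty)
    (hclosed : ∀ a ∈ s, ∀ b, G.Adj a b → b ∈ s) : s = Finset.univ := by
  refine eq_univ_iff_forall.mpr fun y => ?_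
  by_contra hy
  obtain ⟨a, ha, b, hb, hab⟩ := hG.exists_adj_mem_notMem (s := (s : Set V)) hs.choose_spec hy
  exact hb (hclosed a ha b hab)

variable [DecidableRel G.Adj]

theorem Connected.nonempty_iso_top_of_isNClique {k : ℕ} (hG : G.Connected)
    (hreg : G.IsRegularOfDegree k) {s : Finset V} (hs : G.IsNClique (k + 1) s) :
    Nonempty (G ≃g (⊤ : SimpleGraph (Fin (k + 1)))) := by
  have hnbr : ∀ a ∈ s, G.neighborFinset a = s.erase a := fun a ha =>
    (eq_of_subset_of_card_le
      (fun b hb => (G.mem_neighborFinset a b).mpr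
        (hs.isClique ha (mem_of_mem_erase hb) (ne_of_mem_erase hb).symm))
      (by rw [card_neighborFinset_eq_degree, hreg a, card_erase_of_mem ha, hs.card_eq]; rfl)).symm
  have huniv : s = Finset.univ := hG.eq_univ_of_adj_closed
    (card_pos.mp (by rw [hs.card_eq]; omega))
    (fun a ha b hab => mem_of_mem_erase (hnbr a ha ▸ (G.mem_neighborFinset a b).mpr hab))
  have hcard : Fintype.card V = k + 1 := by rw [← card_univ, ← huniv, hs.card_eq]
  have hadj : ∀ a b, G.Adj a b ↔ a ≠ b := fun a b =>
    ⟨G.ne_of_adj, hs.isClique (by simp [huniv]) (by simp [huniv])⟩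
  exact ⟨⟨Fintype.equivFinOfCardEq hcard, by simp [hadj]⟩⟩

theorem Connected.exists_isIndepSet_subset_card_le_three_mul (hG : G.Connected)
    (hdeg : ∀ v, G.degree v ≤ 3) {b : V} (s : Finset V) (hb : b ∉ s) :
    ∃ I ⊆ s, G.IsIndepSet (I : Set V) ∧ #s ≤ 3 * #I := by
  induction s using Finset.strongInduction with
  | H s ih =>
  rcases s.eq_empty_or_nonempty with rfl | ⟨x, hx⟩
  · exact ⟨∅, Finset.Subset.refl _, by simp, by simp⟩
  obtain ⟨a, ha, c, hc, hac⟩ := hG.exists_adj_mem_notMem (s := (s : Set V)) hx hb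
  set N := insert a (G.neighborFinset a)
  have hsN : #(s ∩ N) ≤ 3 := by
    -- `a` has a neighbour `c` outside `s`, hence at most two inside
    calc #(s ∩ N) ≤ #(insert a ((G.neighborFinset a).erase c)) := by
          refine card_le_card fun v hv => ?_
          obtain ⟨hvs, hvN⟩ := mem_inter.mp hv
          rw [Finset.mem_insert, mem_erase]
          rcases Finset.mem_insert.mp hvN with rfl | hva
          · exact .inl rfl
          · exact .inr ⟨fun h => hc (h ▸ hvs), hva⟩
      _ ≤ 3 := by
          refine (card_insert_le _ _).trans ?_
          rw [card_erase_of_mem ((G.mem_neighborFinset a c).mpr hac),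
            card_neighborFinset_eq_degree]
          have := hdeg a
          omega
  have hss : s \ N ⊂ s := (Finset.ssubset_iff_of_subset sdiff_subset).mpr
    ⟨a, ha, fun h => (mem_sdiff.mp h).2 (mem_insert_self _ _)⟩
  obtain ⟨I, hIs, hI, hcard⟩ := ih (s \ N) hss (fun h => hb (mem_sdiff.mp h).1)
  have haI : ∀ v ∈ I, v ≠ a ∧ ¬ G.Adj a v := fun v hv => by
    have := (mem_sdiff.mp (hIs hv)).2
    simp only [N, Finset.mem_insert, mem_neighborFinset, not_or] at this
    exact this
  refine ⟨insert a I, insert_subset ha (hIs.trans sdiff_subset), ?_, ?_⟩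
  · rw [coe_insert, isIndepSet_iff, Set.pairwise_insert]
    exact ⟨hI, fun v hv _ => ⟨(haI v hv).2, fun h => (haI v hv).2 h.symm⟩⟩
  · rw [card_insert_of_notMem fun h => (haI a h).1 rfl]
    have := card_sdiff_add_card_inter s N
    omega

theorem Connected.card_add_three_mul_card_le_indepNum (hG : G.Connected)
    (hdeg : ∀ v, G.degree v ≤ 3) {I₀ K : Finset V} (hI₀ : G.IsIndepSet (I₀ : Set V)) (hne : I₀.Nonempty)
    (hK : ∀ a ∈ I₀, insert a (G.neighborFinset a) ⊆ K) :
    Fintype.card V + 3 * #I₀ ≤ 3 * G.indepNum + #K := by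
  obtain ⟨a, ha⟩ := hne
  obtain ⟨I, hIK, hI, hcard⟩ := hG.exists_isIndepSet_subset_card_le_three_mul hdeg Kᶜ
    (b := a) (by simpa using hK a ha (mem_insert_self _ _))
  have hout : ∀ v ∈ I₀, ∀ w ∈ I, w ∉ insert v (G.neighborFinset v) := fun v hv w hw h =>
    mem_compl.mp (hIK hw) (hK v hv h)
  have hJ : G.IsIndepSet ((I₀ ∪ I : Finset V) : Set V) := by
    have hnadj : ∀ v ∈ I₀, ∀ w ∈ I, ¬ G.Adj v w := fun v hv w hw hvw =>
      hout v hv w hw (mem_insert_of_mem ((G.mem_neighborFinset v w).mpr hvw))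
    rw [coe_union, isIndepSet_iff, Set.pairwise_union]
    exact ⟨hI₀, hI, fun v hv w hw _ => ⟨hnadj v hv w hw, fun h => hnadj v hv w hw h.symm⟩⟩
  have hdisj : Disjoint I₀ I := Finset.disjoint_left.mpr fun v hv hvI =>
    hout v hv v hvI (mem_insert_self _ _)
  have := hJ.card_le_indepNum
  rw [card_union_of_disjoint hdisj] at this
  have := card_compl K
  have := card_le_univ K
  omega

theorem Connected.card_le_three_mul_indepNum_add_one (hG : G.Connected)
    (hdeg : ∀ v, G.degree v ≤ 3) : Fintype.card V ≤ 3 * G.indepNum + 1 := by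
  obtain ⟨v⟩ := hG.nonempty
  have hbound := hG.card_add_three_mul_card_le_indepNum hdeg (I₀ := {v})
    (K := insert v (G.neighborFinset v)) (by simp) (singleton_nonempty v) (by simp)
  have hK : #(insert v (G.neighborFinset v)) ≤ 4 := (card_insert_le _ _).trans
    (by rw [card_neighborFinset_eq_degree]; linarith [hdeg v])
  rw [Finset.card_singleton] at hbound
  omega

theorem Connected.card_le_three_mul_indepNum_of_two_le_card_inter (hG : G.Connected)
    (hdeg : ∀ v, G.degree v ≤ 3) {u v : V} (huv : u ≠ v) (hnadj : ¬ G.Adj u v)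
    (hcommon : 2 ≤ #(G.neighborFinset u ∩ G.neighborFinset v)) :
    Fintype.card V ≤ 3 * G.indepNum := by
  have hbound := hG.card_add_three_mul_card_le_indepNum hdeg (I₀ := {u, v})
    (K := insert u (insert v (G.neighborFinset u ∪ G.neighborFinset v)))
    (by simpa [Set.pairwise_pair, hnadj] using fun _ (h : G.Adj v u) => hnadj h.symm)
    (insert_nonempty _ _)
    (by
      intro a ha w hw
      simp only [Finset.mem_insert, Finset.mem_singleton, Finset.mem_union] at ha hw ⊢
      rcases ha with rfl | rfl <;> tauto)
  have hK : #(insert u (insert v (G.neighborFinset u ∪ G.neighborFinset v))) ≤ 6 := by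
    have := card_union_add_card_inter (G.neighborFinset u) (G.neighborFinset v)
    rw [card_neighborFinset_eq_degree, card_neighborFinset_eq_degree] at this
    have := card_insert_le u (insert v (G.neighborFinset u ∪ G.neighborFinset v))
    have := card_insert_le v (G.neighborFinset u ∪ G.neighborFinset v)
    linarith [hdeg u, hdeg v]
  rw [card_pair huv] at hbound
  omega

theorem CliqueFree.card_inter_neighborFinset_le_one (hK4 : G.CliqueFree 4)
    (hnonadj : ∀ u v, u ≠ v → ¬ G.Adj u v → #(G.neighborFinset u ∩ G.neighborFinset v) ≤ 1)
    {u v : V} (huv : u ≠ v) : #(G.neighborFinset u ∩ G.neighborFinset v) ≤ 1 := by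
  by_cases hadj : G.Adj u v
  swap
  · exact hnonadj u v huv hadj
  by_contra! h2
  obtain ⟨y, hy, z, hz, hyz⟩ := one_lt_card.mp h2
  simp only [Finset.mem_inter, mem_neighborFinset] at hy hz
  by_cases hyz' : G.Adj y z
  · refine hK4 {u, v, y, z} ((is3Clique_triple_iff.mpr ⟨hy.2, hz.2, hyz'⟩).insert ?_)
    simp only [Finset.mem_insert, Finset.mem_singleton, forall_eq_or_imp, forall_eq]
    exact ⟨hadj, hy.1, hz.1⟩
  · -- `y` and `z` are non-adjacent with the two common neighbours `u` and `v`
    have hsub : ({u, v} : Finset V) ⊆ G.neighborFinset y ∩ G.neighborFinset z := by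
      intro w hw
      rcases Finset.mem_insert.mp hw with rfl | hw
      · simp [hy.1.symm, hz.1.symm]
      · rw [Finset.mem_singleton.mp hw]; simp [hy.2.symm, hz.2.symm]
    have := Finset.card_le_card hsub
    rw [card_pair huv] at this
    linarith [hnonadj y z hyz hyz']

theorem IsNClique.eq_insert_insert_inter {t : Finset V} (ht : G.IsNClique 3 t) {a b : V}
    (ha : a ∈ t) (hb : b ∈ t)
    (hcommon : #(G.neighborFinset a ∩ G.neighborFinset b) ≤ 1) :
    t = insert a (insert b (G.neighborFinset a ∩ G.neighborFinset b)) := by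
  refine eq_of_subset_of_card_le (fun c hc => ?_) ?_
  · rcases eq_or_ne a c with rfl | hac
    · exact mem_insert_self _ _
    rcases eq_or_ne b c with rfl | hbc
    · exact mem_insert_of_mem (mem_insert_self _ _)
    refine mem_insert_of_mem (mem_insert_of_mem ?_)
    simp only [Finset.mem_inter, mem_neighborFinset]
    exact ⟨ht.isClique ha hc hac, ht.isClique hb hc hbc⟩
  · rw [ht.card_eq]
    have := card_insert_le a (insert b (G.neighborFinset a ∩ G.neighborFinset b))
    have := card_insert_le b (G.neighborFinset a ∩ G.neighborFinset b)
    omega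

theorem IsNClique.eq_of_two_le_card_inter
    (hC4 : ∀ u v, u ≠ v → #(G.neighborFinset u ∩ G.neighborFinset v) ≤ 1) {t t' : Finset V}
    (ht : G.IsNClique 3 t) (ht' : G.IsNClique 3 t') (h : 2 ≤ #(t ∩ t')) : t = t' := by
  obtain ⟨a, ha, b, hb, hab⟩ := one_lt_card.mp h
  rw [Finset.mem_inter] at ha hb
  rw [ht.eq_insert_insert_inter ha.1 hb.1 (hC4 a b hab),
    ht'.eq_insert_insert_inter ha.2 hb.2 (hC4 a b hab)]

end

end SimpleGraph

section

variable {G : SimpleGraph V}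

theorem ClawFree.card_filter_adj_le_two_s4 [DecidableRel G.Adj] (hcf : ClawFree G) {I : Finset V}
    (hI : G.IsIndepSet (I : Set V)) (w : V) : #{a ∈ I | G.Adj a w} ≤ 2 := by
  by_contra! h
  obtain ⟨a, ha, b, hb, c, hc, hab, hac, hbc⟩ := two_lt_card.mp h
  simp only [mem_filter] at ha hb hc
  exact hcf ⟨w, a, b, c, hab, hac, hbc, ha.2.symm, hb.2.symm, hc.2.symm,
    hI ha.1 hb.1 hab, hI ha.1 hc.1 hac, hI hb.1 hc.1 hbc⟩

variable [Fintype V] [DecidableEq V] [DecidableRel G.Adj]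

theorem ClawFree.exists_isNClique_three_mem (hcf : ClawFree G) {v : V} (hv : 2 < G.degree v) :
    ∃ t, G.IsNClique 3 t ∧ v ∈ t := by
  rw [← card_neighborFinset_eq_degree] at hv
  obtain ⟨a, ha, b, hb, c, hc, hab, hac, hbc⟩ := two_lt_card.mp hv
  simp only [mem_neighborFinset] at ha hb hc
  by_cases hab' : G.Adj a b
  · exact ⟨{v, a, b}, is3Clique_triple_iff.mpr ⟨ha, hb, hab'⟩, by simp⟩
  by_cases hac' : G.Adj a c
  · exact ⟨{v, a, c}, is3Clique_triple_iff.mpr ⟨ha, hc, hac'⟩, by simp⟩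
  by_cases hbc' : G.Adj b c
  · exact ⟨{v, b, c}, is3Clique_triple_iff.mpr ⟨hb, hc, hbc'⟩, by simp⟩
  exact (hcf ⟨v, a, b, c, hab, hac, hbc, ha, hb, hc, hab', hac', hbc'⟩).elim

/-- Here every vertex lies in exactly one triangle, so the triangles partition the vertices. -/
theorem ClawFree.three_dvd_card (hcf : ClawFree G) (hreg : G.IsRegularOfDegree 3)
    (hC4 : ∀ u v, u ≠ v → #(G.neighborFinset u ∩ G.neighborFinset v) ≤ 1) :
    3 ∣ Fintype.card V := by
  have hone : ∀ v, #{t ∈ G.cliqueFinset 3 | v ∈ t} = 1 := by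
    intro v
    obtain ⟨t, ht, hvt⟩ := hcf.exists_isNClique_three_mem (by rw [hreg v]; norm_num)
    have hsub : ∀ s, G.IsNClique 3 s → v ∈ s → s ⊆ insert v (G.neighborFinset v) :=
      fun s hs hvs w hw => by
        rcases eq_or_ne v w with rfl | hvw
        · exact mem_insert_self _ _
        · exact mem_insert_of_mem ((G.mem_neighborFinset v w).mpr (hs.isClique hvs hw hvw))
    refine card_eq_one.mpr ⟨t, Finset.ext fun s => ?_⟩
    simp only [mem_filter, mem_cliqueFinset_iff, Finset.mem_singleton]
    refine ⟨fun ⟨hs, hvs⟩ => hs.eq_of_two_le_card_inter hC4 ht ?_, by rintro rfl; exact ⟨ht, hvt⟩⟩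
    -- two triangles through `v` lie in its closed neighbourhood of size four
    have hunion : #(s ∪ t) ≤ 4 := by
      calc #(s ∪ t) ≤ #(insert v (G.neighborFinset v)) :=
            Finset.card_le_card (union_subset (hsub s hs hvs) (hsub t ht hvt))
        _ ≤ 4 := by
            have := card_insert_le v (G.neighborFinset v)
            rw [card_neighborFinset_eq_degree, hreg v] at this
            exact this
    have := card_union_add_card_inter s t
    rw [hs.card_eq, ht.card_eq] at this
    omega
  have hsum := Finset.sum_card hone
  rw [sum_const_nat fun t ht => (mem_cliqueFinset_iff.mp ht).card_eq, mul_one] at hsum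
  exact ⟨_, hsum.symm.trans (mul_comm _ _)⟩

/-- Each vertex of an independent set sends at least three edges out of it, and each vertex
outside receives at most two. -/
theorem ClawFree.five_mul_indepNum_le (hcf : ClawFree G) (hdeg : ∀ v, 3 ≤ G.degree v) :
    5 * G.indepNum ≤ 2 * Fintype.card V := by
  obtain ⟨I, hI⟩ := G.exists_isNIndepSet_indepNum
  have hcount : #I * 3 ≤ #Iᶜ * 2 := by
    refine card_mul_le_card_mul G.Adj (fun a ha => ?_)
      (fun w _ => hcf.card_filter_adj_le_two_s4 hI.isIndepSet w)
    calc 3 ≤ #(G.neighborFinset a) := by rw [card_neighborFinset_eq_degree]; exact hdeg a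
      _ ≤ _ := Finset.card_le_card fun w hw => by
          rw [mem_neighborFinset] at hw
          exact mem_filter.mpr ⟨mem_compl.mpr fun hwI => hI.isIndepSet ha hwI hw.ne hw, hw⟩
  have := card_compl I
  have := card_le_univ I
  rw [← hI.card_eq]
  omega

theorem ClawFree.card_le_three_mul_indepNum (hcf : ClawFree G) (hG : G.Connected)
    (hreg : G.IsRegularOfDegree 3) (hK4 : G.CliqueFree 4) :
    Fintype.card V ≤ 3 * G.indepNum := by
  have hdeg : ∀ v, G.degree v ≤ 3 := fun v => (hreg v).le
  by_cases hpair : ∃ u v, u ≠ v ∧ ¬ G.Adj u v ∧ 2 ≤ #(G.neighborFinset u ∩ G.neighborFinset v)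
  · obtain ⟨u, v, huv, hnadj, hcommon⟩ := hpair
    exact hG.card_le_three_mul_indepNum_of_two_le_card_inter hdeg huv hnadj hcommon
  · push Not at hpair
    have h3 := hcf.three_dvd_card hreg fun u v huv =>
      hK4.card_inter_neighborFinset_le_one (fun u v h h' => Nat.le_of_lt_succ (hpair u v h h')) huv
    have := hG.card_le_three_mul_indepNum_add_one hdeg
    omega

end

theorem indepNumber_eq_indepNum [Finite V] (G : SimpleGraph V) : indepNumber G = G.indepNum := by
  have hle : ∀ k ∈ {k | ∃ I : Set V, I.ncard = k ∧ IsIndep G I}, k ≤ G.indepNum := by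
    rintro k ⟨I, rfl, hI⟩
    have hfin := I.toFinite
    rw [← hfin.coe_toFinset] at hI
    rw [ncard_eq_toFinset_card I hfin]
    exact IsIndepSet.card_le_indepNum hI
  obtain ⟨s, hs⟩ := G.exists_isNIndepSet_indepNum
  exact le_antisymm (csSup_le ⟨0, ∅, by simp, by simp [IsIndep]⟩ hle)
    (le_csSup ⟨_, hle⟩ ⟨s, by rw [ncard_coe_finset, hs.card_eq], hs.isIndepSet⟩)

theorem stmt4 {V : Type*} [Fintype V] (G : SimpleGraph V)
    (hconn : G.Connected) (hcf : ClawFree G)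
    (hcub : ∀ v : V, (G.neighborSet v).ncard = 3)
    (hK4 : ¬ Nonempty (G ≃g (⊤ : SimpleGraph (Fin 4)))) :
    (Fintype.card V : ℝ) / 3 ≤ (indepNumber G : ℝ) ∧
    (indepNumber G : ℝ) ≤ 2 * (Fintype.card V : ℝ) / 5 := by
  classical
  have hreg : G.IsRegularOfDegree 3 := fun v => by
    rw [← card_neighborSet_eq_degree, ← Nat.card_eq_fintype_card, Nat.card_coe_set_eq, hcub v]
  have hK4free : G.CliqueFree 4 := fun s hs => hK4 (hconn.nonempty_iso_top_of_isNClique hreg hs)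
  have hlower := hcf.card_le_three_mul_indepNum hconn hreg hK4free
  have hupper := hcf.five_mul_indepNum_le fun v => (hreg v).ge
  rw [indepNumber_eq_indepNum]
  constructor
  · rw [div_le_iff₀ three_pos]
    exact_mod_cast (by omega : Fintype.card V ≤ G.indepNum * 3)
  · rw [le_div_iff₀ (by norm_num : (0 : ℝ) < 5)]
    exact_mod_cast (by omega : G.indepNum * 5 ≤ 2 * Fintype.card V)
end

section
/- If G ≠ K_4 is a connected, claw-free, cubic graph of order n, then 3n/5 ≤ m(G,3) ≤ 2n/3. -/
open SimpleGraph Set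

variable {V : Type*}

/-!
For a cubic graph, a set percolates under the threshold-3 rule exactly when its complement is
independent, so `m(G,3) = n - α(G)` and the theorem says `n/3 ≤ α(G) ≤ 2n/5`.

Claw-freeness lets a vertex have at most two neighbours in an independent set `I`; double counting
the `3|I|` edges leaving `I` gives `3|I| ≤ 2(n - |I|)`.

For `α(G) ≥ n/3` pick vertices greedily: a vertex with at most two surviving neighbours costs
three vertices, and two non-adjacent vertices with two common neighbours (the tips of a diamond)
cost at most six. When neither move is available the whole graph is a union of vertex-disjoint
triangles joined by a perfect matching (a `K₄` is excluded by connectivity), and Hall's theorem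
chooses one vertex in each triangle so that no matching edge is chosen at both ends.
-/

section Percolation

variable {G : SimpleGraph V} {r : ℕ}

lemma ncard_neighborSet_inter_lt [Finite V] (hdeg : ∀ v, (G.neighborSet v).ncard ≤ r)
    {B : Set V} {w x : V} (hwx : G.Adj w x) (hx : x ∉ B) :
    (G.neighborSet w ∩ B).ncard < r :=
  calc (G.neighborSet w ∩ B).ncard ≤ (G.neighborSet w \ {x}).ncard :=
        Set.ncard_le_ncard fun y hy => ⟨hy.1, fun hyx => hx (hyx ▸ hy.2)⟩
    _ < (G.neighborSet w).ncard := Set.ncard_sdiff_singleton_lt_of_mem hwx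
    _ ≤ r := hdeg w

lemma notMem_percStep_of_adj [Finite V] (hdeg : ∀ v, (G.neighborSet v).ncard ≤ r)
    {B : Set V} {u v : V} (huv : G.Adj u v) (hu : u ∉ B) (hv : v ∉ B) :
    u ∉ percStep G r B := by
  rintro (h | h)
  · exact hu h
  · exact (ncard_neighborSet_inter_lt hdeg huv hv).not_ge h

/-- Two adjacent white vertices each see at most `r - 1` blue neighbours, so neither ever
turns blue. -/
theorem IsPercolating.isIndep_compl [Finite V] (hdeg : ∀ v, (G.neighborSet v).ncard ≤ r)
    {S : Set V} (hS : IsPercolating G r S) : IsIndep G Sᶜ := by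
  intro u hu v hv _ huv
  obtain ⟨n, hn⟩ := hS
  have white : ∀ k, u ∉ (percStep G r)^[k] S ∧ v ∉ (percStep G r)^[k] S := by
    intro k
    induction k with
    | zero => exact ⟨hu, hv⟩
    | succ k ih =>
      rw [Function.iterate_succ_apply']
      exact ⟨notMem_percStep_of_adj hdeg huv ih.1 ih.2,
        notMem_percStep_of_adj hdeg huv.symm ih.2 ih.1⟩
  exact (white n).1 (hn ▸ Set.mem_univ u)

theorem isPercolating_of_isIndep_compl (hdeg : ∀ v, r ≤ (G.neighborSet v).ncard)
    {S : Set V} (hS : IsIndep G Sᶜ) : IsPercolating G r S := by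
  refine ⟨1, Set.eq_univ_of_forall fun x => ?_⟩
  by_cases hx : x ∈ S
  · exact Or.inl hx
  · have hN : G.neighborSet x ∩ S = G.neighborSet x :=
      Set.inter_eq_left.2 fun y hxy => by_contra fun hy => hS hx hy (G.ne_of_adj hxy) hxy
    exact Or.inr (show r ≤ (G.neighborSet x ∩ S).ncard by rw [hN]; exact hdeg x)

theorem percNumber_le {S : Set V} (hS : IsPercolating G r S) : percNumber G r ≤ S.ncard :=
  Nat.sInf_le ⟨S, rfl, hS⟩

end Percolation

theorem exists_isPercolating_ncard_eq_percNumber (G : SimpleGraph V) (r : ℕ) :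
    ∃ S : Set V, IsPercolating G r S ∧ S.ncard = percNumber G r := by
  obtain ⟨S, hcard, hS⟩ := Nat.sInf_mem (⟨_, Set.univ, rfl, 0, rfl⟩ :
    {k | ∃ S : Set V, S.ncard = k ∧ IsPercolating G r S}.Nonempty)
  exact ⟨S, hS, hcard⟩

section Counting

variable [Fintype V] [DecidableEq V] {G : SimpleGraph V} [DecidableRel G.Adj]

theorem ClawFree.card_neighborFinset_inter_le_two (hcf : ClawFree G) {I : Finset V}
    (hI : IsIndep G ↑I) (v : V) : (G.neighborFinset v ∩ I).card ≤ 2 := by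
  by_contra! h
  obtain ⟨a, ha, b, hb, c, hc, hab, hac, hbc⟩ := Finset.two_lt_card.1 h
  simp only [Finset.mem_inter, mem_neighborFinset] at ha hb hc
  exact hcf ⟨v, a, b, c, hab, hac, hbc, ha.1, hb.1, hc.1,
    hI ha.2 hb.2 hab, hI ha.2 hc.2 hac, hI hb.2 hc.2 hbc⟩

theorem ClawFree.five_mul_card_le (hcf : ClawFree G) (hreg : G.IsRegularOfDegree 3)
    {I : Finset V} (hI : IsIndep G ↑I) : 5 * I.card ≤ 2 * Fintype.card V := by
  have hdouble : I.card * 3 ≤ Iᶜ.card * 2 := by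
    refine Finset.card_mul_le_card_mul G.Adj (fun a ha => ?_) (fun b _ => ?_)
    · have hsub : G.neighborFinset a ⊆ Iᶜ.bipartiteAbove G.Adj a := fun b hb => by
        rw [mem_neighborFinset] at hb
        exact Finset.mem_filter.2
          ⟨Finset.mem_compl.2 fun hbI => hI ha hbI (G.ne_of_adj hb) hb, hb⟩
      calc 3 = (G.neighborFinset a).card := (hreg.degree_eq a).symm
        _ ≤ _ := Finset.card_le_card hsub
    · refine le_trans (Finset.card_le_card fun a ha => ?_)
        (hcf.card_neighborFinset_inter_le_two hI b)
      obtain ⟨haI, hab⟩ := Finset.mem_filter.1 ha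
      exact Finset.mem_inter.2 ⟨(mem_neighborFinset _ _ _).2 hab.symm, haI⟩
  rw [Finset.card_compl] at hdouble
  have := I.card_le_univ
  omega

end Counting

section Cliques

variable {G : SimpleGraph V}

theorem SimpleGraph.Preconnected.eq_univ_of_adj_mem [Fintype V] (hG : G.Preconnected)
    {s : Finset V} (hs : s.Nonempty) (hclosed : ∀ ⦃u w⦄, u ∈ s → G.Adj u w → w ∈ s) :
    s = Finset.univ := by
  obtain ⟨a, ha⟩ := hs
  refine Finset.eq_univ_of_forall fun v => ?_
  induction (reachable_iff_reflTransGen a v).1 (hG a v) with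
  | refl => exact ha
  | tail _ huw ih => exact hclosed ih huw

/-- A `4`-clique of a cubic graph is closed under adjacency, so in a connected graph it is
everything. -/
theorem SimpleGraph.Connected.cliqueFree_four [Fintype V] [DecidableRel G.Adj]
    (hconn : G.Connected) (hreg : G.IsRegularOfDegree 3)
    (hK4 : ¬ Nonempty (G ≃g (⊤ : SimpleGraph (Fin 4)))) : G.CliqueFree 4 := by
  classical
  intro s hs
  have hN : ∀ a ∈ s, G.neighborFinset a = s.erase a := fun a ha =>
    (Finset.eq_of_subset_of_card_le
      (fun b hb => (mem_neighborFinset _ _ _).2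
        (hs.1 ha (Finset.mem_of_mem_erase hb) (Finset.ne_of_mem_erase hb).symm))
      (by rw [Finset.card_erase_of_mem ha, hs.2, card_neighborFinset_eq_degree,
        hreg.degree_eq])).symm
  have huniv : s = Finset.univ :=
    hconn.preconnected.eq_univ_of_adj_mem (Finset.card_pos.1 (by rw [hs.2]; omega))
      fun u w hu huw => Finset.mem_of_mem_erase (hN u hu ▸ (mem_neighborFinset _ _ _).2 huw)
  have htop : G = ⊤ := by
    ext u v
    refine ⟨G.ne_of_adj, fun huv => hs.1 ?_ ?_ huv⟩ <;> simp [huniv]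
  have hcard : Fintype.card V = 4 := by rw [← hs.2, huniv, Finset.card_univ]
  subst htop
  exact hK4 ⟨Iso.completeGraph (Fintype.equivFinOfCardEq hcard)⟩

end Cliques

/-- Double counting the incidences between `s` and `s.biUnion t` verifies Hall's condition. -/
theorem Finset.exists_injective_of_le_card_of_card_filter_le {ι α : Type*} [Fintype ι]
    [DecidableEq α] (t : ι → Finset α) {k : ℕ} (hk : 0 < k) (hle : ∀ i, k ≤ (t i).card)
    (hfilter : ∀ a, (Finset.univ.filter fun i => a ∈ t i).card ≤ k) :
    ∃ f : ι → α, Function.Injective f ∧ ∀ i, f i ∈ t i := by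
  refine (Finset.all_card_le_biUnion_card_iff_exists_injective t).1 fun s => ?_
  have hdouble : s.card * k ≤ (s.biUnion t).card * k := by
    refine Finset.card_mul_le_card_mul (fun i a => a ∈ t i) (fun i hi => ?_) (fun a _ => ?_)
    · refine (hle i).trans (Finset.card_le_card fun a ha => ?_)
      exact Finset.mem_filter.2 ⟨Finset.mem_biUnion.2 ⟨i, hi, ha⟩, ha⟩
    · exact (Finset.card_le_card (Finset.filter_subset_filter _ s.subset_univ)).trans
        (hfilter a)
  exact Nat.le_of_mul_le_mul_right hdouble hk

/-- The shape of a cubic claw-free graph in which every vertex lies in exactly one triangle: the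
triangles partition the vertices and the remaining edges form the perfect matching `v — mate v`. -/
structure TriangleMatching (G : SimpleGraph V) where
  triangle : V → Finset V
  mate : V → V
  mem_triangle (v : V) : v ∈ triangle v
  triangle_eq_of_mem {u v : V} : u ∈ triangle v → triangle u = triangle v
  card_triangle (v : V) : (triangle v).card = 3
  adj_mate (v : V) : G.Adj v (mate v)
  mate_notMem_triangle (v : V) : mate v ∉ triangle v
  mem_triangle_or_eq_mate {u v : V} : G.Adj u v → v ∈ triangle u ∨ v = mate u

namespace TriangleMatching

section

variable {G : SimpleGraph V} (M : TriangleMatching G)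

theorem mem_triangle_iff {u v : V} : u ∈ M.triangle v ↔ M.triangle u = M.triangle v :=
  ⟨M.triangle_eq_of_mem, fun h => h ▸ M.mem_triangle u⟩

theorem mate_mate (v : V) : M.mate (M.mate v) = v := by
  refine ((M.mem_triangle_or_eq_mate (M.adj_mate v).symm).resolve_left fun hv => ?_).symm
  exact M.mate_notMem_triangle v ((M.mem_triangle_iff).2 (M.triangle_eq_of_mem hv).symm)

variable [Fintype V] [DecidableEq V]

theorem card_eq_three_mul : Fintype.card V = 3 * (Finset.univ.image M.triangle).card := by
  rw [← Finset.card_univ, Finset.card_eq_sum_card_image M.triangle, mul_comm,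
    ← smul_eq_mul, ← Finset.sum_const]
  refine Finset.sum_congr rfl fun T hT => ?_
  obtain ⟨v, -, rfl⟩ := Finset.mem_image.1 hT
  rw [← M.card_triangle v]
  congr 1
  ext u
  simp [M.mem_triangle_iff]

theorem triangle_eq_of_mem_image {T : Finset V} (hT : T ∈ Finset.univ.image M.triangle) {u : V}
    (hu : u ∈ T) : M.triangle u = T := by
  obtain ⟨v, -, rfl⟩ := Finset.mem_image.1 hT
  exact M.triangle_eq_of_mem hu

/-- Hall's theorem applies: each triangle has three matching edges and each matching edge meets
at most two triangles. -/
theorem exists_injective_mateEdge :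
    ∃ f : Finset.univ.image M.triangle → Sym2 V, Function.Injective f ∧
      ∀ T, ∃ u ∈ T.1, s(u, M.mate u) = f T := by
  have hinj (T : Finset.univ.image M.triangle) : Set.InjOn (fun u => s(u, M.mate u)) T.1 := by
    intro u hu u' hu' huu'
    rcases Sym2.eq_iff.1 huu' with ⟨h, -⟩ | ⟨h, -⟩
    · exact h
    · rw [Finset.mem_coe, ← M.triangle_eq_of_mem_image T.2 hu', h] at hu
      exact absurd hu (M.mate_notMem_triangle u')
  have hcard (T : Finset.univ.image M.triangle) :
      2 ≤ (T.1.image fun u => s(u, M.mate u)).card := by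
    obtain ⟨v, -, hv⟩ := Finset.mem_image.1 T.2
    rw [Finset.card_image_of_injOn (hinj T), ← hv, M.card_triangle]
    omega
  have hfilter (e : Sym2 V) : (Finset.univ.filter fun T : Finset.univ.image M.triangle =>
      e ∈ T.1.image fun u => s(u, M.mate u)).card ≤ 2 := by
    induction e using Sym2.ind with
    | _ x y =>
      let tri (w : V) : Finset.univ.image M.triangle :=
        ⟨M.triangle w, Finset.mem_image_of_mem _ (Finset.mem_univ w)⟩
      refine (Finset.card_le_card (t := {tri x, tri y}) fun T hT => ?_).trans Finset.card_le_two
      obtain ⟨u, hu, hux⟩ := Finset.mem_image.1 (Finset.mem_filter.1 hT).2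
      have hTu : tri u = T := Subtype.ext (M.triangle_eq_of_mem_image T.2 hu)
      rcases Sym2.eq_iff.1 hux with ⟨rfl, -⟩ | ⟨rfl, -⟩ <;> simp [← hTu]
  obtain ⟨f, hf, hmem⟩ :=
    Finset.exists_injective_of_le_card_of_card_filter_le _ two_pos hcard hfilter
  exact ⟨f, hf, fun T => Finset.mem_image.1 (hmem T)⟩

end

theorem exists_isIndep [Fintype V] {G : SimpleGraph V} (M : TriangleMatching G) :
    ∃ I : Finset V, IsIndep G ↑I ∧ Fintype.card V ≤ 3 * I.card := by
  classical
  obtain ⟨f, hf, hsel⟩ := M.exists_injective_mateEdge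
  choose sel hsel hfsel using hsel
  have htri (T : Finset.univ.image M.triangle) : M.triangle (sel T) = T.1 :=
    M.triangle_eq_of_mem_image T.2 (hsel T)
  have hinj : Function.Injective sel := fun T T' h =>
    Subtype.ext (by rw [← htri T, ← htri T', h])
  refine ⟨Finset.univ.image sel, ?_, ?_⟩
  · intro p hp q hq hpq hadj
    obtain ⟨T, -, rfl⟩ := Finset.mem_image.1 (Finset.mem_coe.1 hp)
    obtain ⟨T', -, rfl⟩ := Finset.mem_image.1 (Finset.mem_coe.1 hq)
    refine hpq (congrArg sel ?_)
    rcases M.mem_triangle_or_eq_mate hadj with h | h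
    · exact Subtype.ext (by rw [← htri T, ← htri T', M.triangle_eq_of_mem h])
    · refine hf ?_
      rw [← hfsel, ← hfsel, h, M.mate_mate, Sym2.eq_swap]
  · rw [Finset.card_image_of_injective _ hinj, Finset.card_univ, Fintype.card_coe,
      M.card_eq_three_mul]

end TriangleMatching

section TriangleStructure

variable [Fintype V] [DecidableEq V] {G : SimpleGraph V} [DecidableRel G.Adj]

/-- If `p` were adjacent to two distinct neighbours `q`, `r` of `v`, then `{v, p, q, r}` would be a
`K₄` or `q`, `r` would have the two common neighbours `v`, `p`. -/
lemma eq_of_adj_of_adj (hK4 : G.CliqueFree 4)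
    (hsparse : ∀ a b, a ≠ b → ¬ G.Adj a b →
      (G.neighborFinset a ∩ G.neighborFinset b).card ≤ 1)
    {v p q r : V} (hp : G.Adj v p) (hq : G.Adj v q) (hr : G.Adj v r) (hpq : G.Adj p q)
    (hpr : G.Adj p r) : q = r := by
  by_contra hqr
  by_cases hqr' : G.Adj q r
  · exact hK4 {v, p, q, r}
      ((is3Clique_triple_iff.2 ⟨hpq, hpr, hqr'⟩).insert (by simp [hp, hq, hr]))
  · have hsub : ({v, p} : Finset V) ⊆ G.neighborFinset q ∩ G.neighborFinset r := by
      simp [Finset.insert_subset_iff, hq.symm, hr.symm, hpq.symm, hpr.symm]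
    have := (Finset.card_le_card hsub).trans (hsparse q r hqr hqr')
    rw [Finset.card_pair (G.ne_of_adj hp)] at this
    omega

lemma exists_neighborFinset_eq_triangle_add_mate (hreg : G.IsRegularOfDegree 3)
    (hcf : ClawFree G) (hK4 : G.CliqueFree 4)
    (hsparse : ∀ a b, a ≠ b → ¬ G.Adj a b →
      (G.neighborFinset a ∩ G.neighborFinset b).card ≤ 1)
    (v : V) : ∃ x y z : V, G.neighborFinset v = {x, y, z} ∧
      G.Adj x y ∧ ¬ G.Adj x z ∧ ¬ G.Adj y z := by
  obtain ⟨a, b, c, hab, hac, hbc, hN⟩ := Finset.card_eq_three.1 (hreg.degree_eq v ▸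
    G.card_neighborFinset_eq_degree v)
  have hadj : ∀ w ∈ ({a, b, c} : Finset V), G.Adj v w := fun w hw =>
    (mem_neighborFinset _ _ _).1 (hN ▸ hw)
  have ha := hadj a (by simp)
  have hb := hadj b (by simp)
  have hc := hadj c (by simp)
  have hedge : G.Adj a b ∨ G.Adj a c ∨ G.Adj b c := by
    by_contra! h
    exact hcf ⟨v, a, b, c, hab, hac, hbc, ha, hb, hc, h.1, h.2.1, h.2.2⟩
  have hle {p q r : V} : G.Adj v p → G.Adj v q → G.Adj v r → G.Adj p q → G.Adj p r → q = r :=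
    eq_of_adj_of_adj hK4 hsparse
  rcases hedge with h | h | h
  · exact ⟨a, b, c, hN, h, fun h' => hbc (hle ha hb hc h h'),
      fun h' => hac (hle hb ha hc h.symm h')⟩
  · exact ⟨a, c, b, by rw [hN, Finset.pair_comm], h, fun h' => hbc (hle ha hc hb h h').symm,
      fun h' => hab (hle hc ha hb h.symm h')⟩
  · exact ⟨b, c, a, by rw [hN]; ext; simp; tauto, h, fun h' => hac (hle hb hc ha h h').symm,
      fun h' => hab (hle hc hb ha h.symm h').symm⟩

lemma pair_eq_of_neighborFinset_eq {v x y z p q : V} (hN : G.neighborFinset v = {x, y, z})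
    (hxz : ¬ G.Adj x z) (hyz : ¬ G.Adj y z) (hp : G.Adj v p) (hq : G.Adj v q)
    (hpq : G.Adj p q) : ({p, q} : Finset V) = {x, y} := by
  rw [← mem_neighborFinset, hN] at hp hq
  simp only [Finset.mem_insert, Finset.mem_singleton] at hp hq
  rcases hp with rfl | rfl | rfl <;> rcases hq with rfl | rfl | rfl <;>
    simp_all [Finset.pair_comm, G.adj_comm]

/-- `triangle v` is `v` with its two adjacent neighbours, `mate v` is its third neighbour. -/
theorem nonempty_triangleMatching (hreg : G.IsRegularOfDegree 3) (hcf : ClawFree G)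
    (hK4 : G.CliqueFree 4)
    (hsparse : ∀ a b, a ≠ b → ¬ G.Adj a b →
      (G.neighborFinset a ∩ G.neighborFinset b).card ≤ 1) :
    Nonempty (TriangleMatching G) := by
  choose x y z hN hxy hxz hyz using
    exists_neighborFinset_eq_triangle_add_mate hreg hcf hK4 hsparse
  have hadj (v w : V) : G.Adj v w ↔ w = x v ∨ w = y v ∨ w = z v := by
    rw [← mem_neighborFinset, hN]
    simp
  have htri {v p q : V} (hp : G.Adj v p) (hq : G.Adj v q) (hpq : G.Adj p q) :
      ({v, x v, y v} : Finset V) = {v, p, q} := by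
    rw [pair_eq_of_neighborFinset_eq (hN v) (hxz v) (hyz v) hp hq hpq]
  have hxv (v : V) : G.Adj v (x v) := (hadj v _).2 (Or.inl rfl)
  have hyv (v : V) : G.Adj v (y v) := (hadj v _).2 (Or.inr (Or.inl rfl))
  have hzv (v : V) : G.Adj v (z v) := (hadj v _).2 (Or.inr (Or.inr rfl))
  refine ⟨{
    triangle := fun v => {v, x v, y v}
    mate := z
    mem_triangle := ?_
    triangle_eq_of_mem := ?_
    card_triangle := ?_
    adj_mate := hzv
    mate_notMem_triangle := ?_
    mem_triangle_or_eq_mate := ?_ }⟩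
  · intro v
    simp
  · intro u v hu
    simp only [Finset.mem_insert, Finset.mem_singleton] at hu
    rcases hu with rfl | rfl | rfl
    · rfl
    · rw [htri (hxv v).symm (hxy v) (hyv v), Finset.insert_comm]
    · rw [htri (hyv v).symm (hxy v).symm (hxv v), Finset.insert_comm, Finset.pair_comm]
  · intro v
    rw [Finset.card_eq_three]
    exact ⟨v, x v, y v, G.ne_of_adj (hxv v), G.ne_of_adj (hyv v), G.ne_of_adj (hxy v), rfl⟩
  · intro v h
    simp only [Finset.mem_insert, Finset.mem_singleton] at h
    rcases h with h | h | h
    · exact G.ne_of_adj (hzv v) h.symm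
    · exact hyz v (h ▸ (hxy v).symm)
    · exact hxz v (h ▸ hxy v)
  · intro u v huv
    rcases (hadj u v).1 huv with h | h | h <;> simp [h]

end TriangleStructure

def HasIndepThird (G : SimpleGraph V) (A : Finset V) : Prop :=
  ∃ I ⊆ A, IsIndep G ↑I ∧ A.card ≤ 3 * I.card

section Greedy

variable [DecidableEq V] {G : SimpleGraph V}

theorem hasIndepThird_of_isIndep {A J X : Finset V} (hJ : IsIndep G ↑J) (hJne : J.Nonempty)
    (hJX : J ⊆ A ∩ X) (hadj : ∀ u ∈ J, ∀ w, G.Adj u w → w ∈ X)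
    (hcard : (A ∩ X).card ≤ 3 * J.card) (ih : ∀ B ⊂ A, HasIndepThird G B) :
    HasIndepThird G A := by
  obtain ⟨u, hu⟩ := hJne
  obtain ⟨hJA, hJX⟩ := Finset.subset_inter_iff.1 hJX
  have hssub : A \ X ⊂ A := (Finset.ssubset_iff_of_subset Finset.sdiff_subset).2
    ⟨u, hJA hu, fun h => (Finset.mem_sdiff.1 h).2 (hJX hu)⟩
  obtain ⟨I, hIA, hI, hIcard⟩ := ih (A \ X) hssub
  have hIX (w : V) (hw : w ∈ I) : w ∉ X := (Finset.mem_sdiff.1 (hIA hw)).2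
  refine ⟨J ∪ I, Finset.union_subset hJA (hIA.trans Finset.sdiff_subset), ?_, ?_⟩
  · rw [Finset.coe_union]
    exact Set.pairwise_union.2 ⟨hJ, hI, fun a ha b hb _ =>
      ⟨fun hab => hIX b hb (hadj a ha b hab), fun hba => hIX b hb (hadj a ha b hba.symm)⟩⟩
  · rw [Finset.card_union_of_disjoint
      (Finset.disjoint_left.2 fun a ha haI => hIX a haI (hJX ha))]
    have := Finset.card_sdiff_add_card_inter A X
    omega

variable [Fintype V] [DecidableRel G.Adj]

theorem hasIndepThird_of_card_inter_le_two {A : Finset V} {v : V} (hv : v ∈ A)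
    (hdeg : (G.neighborFinset v ∩ A).card ≤ 2) (ih : ∀ B ⊂ A, HasIndepThird G B) :
    HasIndepThird G A := by
  refine hasIndepThird_of_isIndep (J := {v}) (X := insert v (G.neighborFinset v))
    (by simp [IsIndep]) (Finset.singleton_nonempty v) (by simp [hv]) (by simp +contextual) ?_ ih
  calc (A ∩ insert v (G.neighborFinset v)).card
      ≤ (insert v (G.neighborFinset v ∩ A)).card :=
        Finset.card_le_card fun w => by simp only [Finset.mem_inter, Finset.mem_insert]; tauto
    _ ≤ (G.neighborFinset v ∩ A).card + 1 := Finset.card_insert_le _ _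
    _ ≤ 3 * ({v} : Finset V).card := by simp; omega

theorem hasIndepThird_of_two_le_card_inter (hreg : G.IsRegularOfDegree 3) {A : Finset V}
    {a b : V} (ha : a ∈ A) (hb : b ∈ A) (hab : a ≠ b) (hnadj : ¬ G.Adj a b)
    (hcommon : 2 ≤ (G.neighborFinset a ∩ G.neighborFinset b).card)
    (ih : ∀ B ⊂ A, HasIndepThird G B) : HasIndepThird G A := by
  have hunion : (G.neighborFinset a ∪ G.neighborFinset b).card ≤ 4 := by
    have := Finset.card_union_add_card_inter (G.neighborFinset a) (G.neighborFinset b)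
    rw [card_neighborFinset_eq_degree, card_neighborFinset_eq_degree, hreg.degree_eq,
      hreg.degree_eq] at this
    omega
  refine hasIndepThird_of_isIndep (J := {a, b})
    (X := insert a (insert b (G.neighborFinset a ∪ G.neighborFinset b)))
    (by simp [IsIndep, Set.pairwise_pair, hnadj, G.adj_comm]) (Finset.insert_nonempty a {b})
    (by simp [Finset.insert_subset_iff, ha, hb]) (by simp; tauto) ?_ ih
  calc (A ∩ insert a (insert b (G.neighborFinset a ∪ G.neighborFinset b))).card
      ≤ (insert a (insert b (G.neighborFinset a ∪ G.neighborFinset b))).card :=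
        Finset.card_le_card Finset.inter_subset_right
    _ ≤ (G.neighborFinset a ∪ G.neighborFinset b).card + 2 :=
        (Finset.card_insert_le _ _).trans (Nat.succ_le_succ (Finset.card_insert_le _ _))
    _ ≤ 3 * ({a, b} : Finset V).card := by rw [Finset.card_pair hab]; omega

/-- If neither greedy step applies, `A` is closed under adjacency, hence the whole graph, and
it carries a `TriangleMatching`. -/
theorem hasIndepThird (hreg : G.IsRegularOfDegree 3) (hcf : ClawFree G) (hK4 : G.CliqueFree 4)
    (hconn : G.Preconnected) (A : Finset V) : HasIndepThird G A := by
  induction A using Finset.strongInduction with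
  | H A ih =>
  by_cases hlow : ∃ v ∈ A, (G.neighborFinset v ∩ A).card ≤ 2
  · obtain ⟨v, hv, hdeg⟩ := hlow
    exact hasIndepThird_of_card_inter_le_two hv hdeg ih
  by_cases hdiamond : ∃ a ∈ A, ∃ b ∈ A, a ≠ b ∧ ¬ G.Adj a b ∧
      2 ≤ (G.neighborFinset a ∩ G.neighborFinset b).card
  · obtain ⟨a, ha, b, hb, hab, hnadj, hcommon⟩ := hdiamond
    exact hasIndepThird_of_two_le_card_inter hreg ha hb hab hnadj hcommon ih
  obtain rfl | hA := A.eq_empty_or_nonempty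
  · exact ⟨∅, subset_rfl, by simp [IsIndep], by simp⟩
  push Not at hlow hdiamond
  have hclosed (u : V) (hu : u ∈ A) : G.neighborFinset u ⊆ A := by
    refine Finset.inter_eq_left.1 (Finset.eq_of_subset_of_card_le Finset.inter_subset_left ?_)
    rw [card_neighborFinset_eq_degree, hreg.degree_eq]
    exact hlow u hu
  obtain rfl : A = Finset.univ := hconn.eq_univ_of_adj_mem hA fun u w hu huw =>
    hclosed u hu ((mem_neighborFinset _ _ _).2 huw)
  obtain ⟨M⟩ := nonempty_triangleMatching hreg hcf hK4 fun a b hab hnadj =>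
    Nat.le_of_lt_succ (hdiamond a (Finset.mem_univ a) b (Finset.mem_univ b) hab hnadj)
  obtain ⟨I, hI, hcard⟩ := M.exists_isIndep
  exact ⟨I, Finset.subset_univ I, hI, by rwa [Finset.card_univ]⟩

end Greedy

theorem SimpleGraph.isRegularOfDegree_of_ncard_neighborSet [Fintype V] {G : SimpleGraph V}
    [DecidableRel G.Adj] {d : ℕ} (h : ∀ v, (G.neighborSet v).ncard = d) :
    G.IsRegularOfDegree d := fun v => by
  rw [← card_neighborFinset_eq_degree, neighborFinset_def, ← Set.ncard_eq_toFinset_card', h]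

section Bounds

variable [Fintype V] {G : SimpleGraph V}

theorem ClawFree.three_mul_card_le_five_mul_percNumber (hcf : ClawFree G)
    (hcub : ∀ v, (G.neighborSet v).ncard = 3) : 3 * Fintype.card V ≤ 5 * percNumber G 3 := by
  classical
  obtain ⟨S, hS, hcard⟩ := exists_isPercolating_ncard_eq_percNumber G 3
  have h5 := hcf.five_mul_card_le (isRegularOfDegree_of_ncard_neighborSet hcub)
    (I := Sᶜ.toFinset) (by rw [Set.coe_toFinset]; exact hS.isIndep_compl fun v => (hcub v).le)
  have hsum : S.ncard + Sᶜ.toFinset.card = Fintype.card V := by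
    rw [← Set.ncard_eq_toFinset_card', Set.ncard_add_ncard_compl, Nat.card_eq_fintype_card]
  omega

theorem ClawFree.three_mul_percNumber_le (hcf : ClawFree G) (hconn : G.Connected)
    (hcub : ∀ v, (G.neighborSet v).ncard = 3)
    (hK4 : ¬ Nonempty (G ≃g (⊤ : SimpleGraph (Fin 4)))) :
    3 * percNumber G 3 ≤ 2 * Fintype.card V := by
  classical
  have hreg : G.IsRegularOfDegree 3 := isRegularOfDegree_of_ncard_neighborSet hcub
  obtain ⟨I, -, hI, hcard⟩ := hasIndepThird hreg hcf (hconn.cliqueFree_four hreg hK4)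
    hconn.preconnected Finset.univ
  have hle := percNumber_le (isPercolating_of_isIndep_compl (fun v => (hcub v).ge)
    (S := (↑I : Set V)ᶜ) (by rwa [compl_compl]))
  have hsum := Set.ncard_add_ncard_compl (↑I : Set V)
  rw [Set.ncard_coe_finset, Nat.card_eq_fintype_card] at hsum
  rw [Finset.card_univ] at hcard
  omega

end Bounds

theorem stmt5 {V : Type*} [Fintype V] (G : SimpleGraph V)
    (hconn : G.Connected) (hcf : ClawFree G)
    (hcub : ∀ v : V, (G.neighborSet v).ncard = 3)
    (hK4 : ¬ Nonempty (G ≃g (⊤ : SimpleGraph (Fin 4)))) :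
    3 * (Fintype.card V : ℝ) / 5 ≤ (percNumber G 3 : ℝ) ∧
    (percNumber G 3 : ℝ) ≤ 2 * (Fintype.card V : ℝ) / 3 := by
  have hlower : (3 * Fintype.card V : ℝ) ≤ 5 * percNumber G 3 := by
    exact_mod_cast hcf.three_mul_card_le_five_mul_percNumber hcub
  have hupper : (3 * percNumber G 3 : ℝ) ≤ 2 * Fintype.card V := by
    exact_mod_cast hcf.three_mul_percNumber_le hconn hcub hK4
  constructor <;> linarith
end

section
/- If G ≠ K_4 is a connected, claw-free, cubic graph, then the vertex set of G can be uniquely partitioned into sets each of which induces a triangle (K_3) or a diamond (K_4 minus an edge) in G. -/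
open SimpleGraph Set

variable {V : Type*}

/-! Claw-freeness puts every vertex of a cubic graph in a triangle. Two distinct triangles
through a vertex `v` use two of its three neighbours each, so they share an edge `vx`, and since
`G` is not `K₄` their union is a diamond. In a cubic graph a triangle meeting a diamond lies
inside it, and two diamonds that meet coincide. Hence the diamonds, together with the triangles
lying in no diamond, partition the vertices. Conversely, a triangle block `T` of any
triangle-diamond partition lies in no diamond `D`: the block of the vertex of `D \ T` would also
lie in `D`, and two sets of size at least three in a four-element set meet. -/

namespace Set

theorem inter_nonempty_of_ncard_lt_ncard_add_ncard {α : Type*} {s t u : Set α}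
    (hs : s ⊆ u) (ht : t ⊆ u) (hu : u.Finite) (h : u.ncard < s.ncard + t.ncard) :
    (s ∩ t).Nonempty := by
  rw [← not_disjoint_iff_nonempty_inter]
  intro hst
  have := ncard_le_ncard (union_subset hs ht) hu
  rw [ncard_union_eq hst (hu.subset hs) (hu.subset ht)] at this
  omega

end Set

section

variable {G : SimpleGraph V}

namespace SimpleGraph

theorem neighborSet_eq_of_ncard_eq_three {v a b c : V} (hv : (G.neighborSet v).ncard = 3)
    (hab : a ≠ b) (hac : a ≠ c) (hbc : b ≠ c)
    (ha : G.Adj v a) (hb : G.Adj v b) (hc : G.Adj v c) :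
    G.neighborSet v = {a, b, c} :=
  (eq_of_subset_of_ncard_le (by simp [insert_subset_iff, ha, hb, hc])
    (by rw [hv, ncard_eq_three.2 ⟨a, b, c, hab, hac, hbc, rfl⟩])
    (finite_of_ncard_ne_zero (by rw [hv]; norm_num))).symm

theorem Connected.eq_univ_of_neighborSet_subset (hconn : G.Connected) {S : Set V}
    (hS : S.Nonempty) (hclosed : ∀ x ∈ S, G.neighborSet x ⊆ S) : S = univ := by
  obtain ⟨v, hv⟩ := hS
  refine eq_univ_of_forall fun w => ?_
  obtain ⟨p⟩ := hconn.preconnected v w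
  induction p with
  | nil => exact hv
  | cons h _ ih => exact ih (hclosed _ hv h)

theorem nonempty_iso_top_of_isClique (hconn : G.Connected)
    (hcub : ∀ v : V, (G.neighborSet v).ncard = 3) {S : Set V} (hS : G.IsClique S)
    (hS4 : S.ncard = 4) : Nonempty (G ≃g (⊤ : SimpleGraph (Fin 4))) := by
  have hfin : S.Finite := finite_of_ncard_ne_zero (by omega)
  have hclosed : ∀ x ∈ S, G.neighborSet x ⊆ S := by
    intro x hx
    have hsub : S \ {x} ⊆ G.neighborSet x := fun y ⟨hy, hyx⟩ => hS hx hy (Ne.symm hyx)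
    have hcard : (S \ {x}).ncard = 3 := by
      have := ncard_sdiff_singleton_add_one hx hfin
      omega
    rw [← eq_of_subset_of_ncard_le hsub (by rw [hcub, hcard])
      (finite_of_ncard_ne_zero (by rw [hcub]; norm_num))]
    exact sdiff_subset
  have huniv : S = univ := hconn.eq_univ_of_neighborSet_subset
    (nonempty_of_ncard_ne_zero (by omega)) hclosed
  have htop : G = ⊤ := isClique_univ.1 (huniv ▸ hS)
  have : Finite V := finite_univ_iff.1 (huniv ▸ hfin)
  have hcard : Nat.card V = 4 := by rw [← ncard_univ, ← huniv, hS4]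
  subst htop
  exact ⟨Iso.completeGraph (Finite.equivFinOfCardEq hcard)⟩

end SimpleGraph

open SimpleGraph

theorem ClawFree.exists_isTriangle_mem (hcf : ClawFree G) {v : V}
    (hv : (G.neighborSet v).ncard = 3) : ∃ T, IsTriangle G T ∧ v ∈ T := by
  obtain ⟨a, b, c, hab, hac, hbc, hN⟩ := ncard_eq_three.1 hv
  have ha : G.Adj v a := by rw [← mem_neighborSet, hN]; simp
  have hb : G.Adj v b := by rw [← mem_neighborSet, hN]; simp
  have hc : G.Adj v c := by rw [← mem_neighborSet, hN]; simp
  have hedge : G.Adj a b ∨ G.Adj a c ∨ G.Adj b c := by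
    by_contra! h
    exact hcf ⟨v, a, b, c, hab, hac, hbc, ha, hb, hc, h.1, h.2.1, h.2.2⟩
  rcases hedge with h | h | h
  · exact ⟨{v, a, b}, ⟨v, a, b, ha.ne, hb.ne, hab, ha, hb, h, rfl⟩, by simp⟩
  · exact ⟨{v, a, c}, ⟨v, a, c, ha.ne, hc.ne, hac, ha, hc, h, rfl⟩, by simp⟩
  · exact ⟨{v, b, c}, ⟨v, b, c, hb.ne, hc.ne, hbc, hb, hc, h, rfl⟩, by simp⟩

namespace IsTriangle

variable {T : Set V}

theorem ncard (hT : IsTriangle G T) : T.ncard = 3 := by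
  obtain ⟨a, b, c, hab, hac, hbc, -, -, -, rfl⟩ := hT
  exact ncard_eq_three.2 ⟨a, b, c, hab, hac, hbc, rfl⟩

theorem finite (hT : IsTriangle G T) : T.Finite :=
  finite_of_ncard_ne_zero (by rw [hT.ncard]; norm_num)

theorem isClique (hT : IsTriangle G T) : G.IsClique T := by
  obtain ⟨a, b, c, -, -, -, h₁, h₂, h₃, rfl⟩ := hT
  simp [isClique_insert, h₁, h₂, h₃]

theorem adj (hT : IsTriangle G T) {x y : V} (hx : x ∈ T) (hy : y ∈ T) (hxy : x ≠ y) :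
    G.Adj x y :=
  hT.isClique hx hy hxy

theorem subset_insert_neighborSet (hT : IsTriangle G T) {v : V} (hv : v ∈ T) :
    T ⊆ insert v (G.neighborSet v) :=
  fun x hx => (eq_or_ne x v).imp id fun hxv => hT.adj hv hx hxv.symm

theorem diff_singleton_subset_neighborSet (hT : IsTriangle G T) {v : V} (hv : v ∈ T) :
    T \ {v} ⊆ G.neighborSet v :=
  fun _ ⟨hx, hxv⟩ => hT.adj hv hx (Ne.symm hxv)

theorem ncard_diff_singleton (hT : IsTriangle G T) {v : V} (hv : v ∈ T) :
    (T \ {v}).ncard = 2 := by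
  have := ncard_sdiff_singleton_add_one hv hT.finite
  rw [hT.ncard] at this
  omega

theorem exists_third (hT : IsTriangle G T) {v x : V} (hv : v ∈ T) (hx : x ∈ T) (hvx : v ≠ x) :
    ∃ y, y ≠ v ∧ y ≠ x ∧ T = {v, x, y} := by
  have hx' : x ∈ T \ {v} := ⟨hx, hvx.symm⟩
  have hcard : ((T \ {v}) \ {x}).ncard = 1 := by
    have := ncard_sdiff_singleton_add_one hx' (hT.finite.subset sdiff_subset)
    rw [hT.ncard_diff_singleton hv] at this
    omega
  obtain ⟨y, hy⟩ := ncard_eq_one.1 hcard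
  have hyT : y ∈ (T \ {v}) \ {x} := hy ▸ mem_singleton y
  refine ⟨y, hyT.1.2, hyT.2, ?_⟩
  have hTv : T = insert v (T \ {v}) := by rw [insert_sdiff_singleton, insert_eq_of_mem hv]
  have hTvx : T \ {v} = insert x ((T \ {v}) \ {x}) := by
    rw [insert_sdiff_singleton, insert_eq_of_mem hx']
  rw [hTv, hTvx, hy]

theorem mem_or_mem_of_adj (hT : IsTriangle G T) {v c d : V} (hv : v ∈ T)
    (hdeg : (G.neighborSet v).ncard = 3) (hc : G.Adj v c) (hd : G.Adj v d) (hcd : c ≠ d) :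
    c ∈ T ∨ d ∈ T := by
  obtain ⟨z, ⟨hzT, -⟩, hz⟩ := inter_nonempty_of_ncard_lt_ncard_add_ncard
    (hT.diff_singleton_subset_neighborSet hv) (show {c, d} ⊆ G.neighborSet v by
      simp [insert_subset_iff, hc, hd])
    (finite_of_ncard_ne_zero (by rw [hdeg]; norm_num))
    (by rw [hdeg, hT.ncard_diff_singleton hv, ncard_pair hcd]; norm_num)
  rcases hz with rfl | rfl
  exacts [Or.inl hzT, Or.inr hzT]

end IsTriangle

namespace IsDiamond

variable {D : Set V}

theorem ncard (hD : IsDiamond G D) : D.ncard = 4 := by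
  obtain ⟨a, b, c, d, hab, hac, had, hbc, hbd, hcd, -, -, -, -, -, -, rfl⟩ := hD
  rw [ncard_insert_of_notMem (by simp [hab, hac, had]),
    ncard_insert_of_notMem (by simp [hbc, hbd]), ncard_pair hcd]

theorem finite (hD : IsDiamond G D) : D.Finite :=
  finite_of_ncard_ne_zero (by rw [hD.ncard]; norm_num)

theorem exists_isTriangle_subset (hD : IsDiamond G D) {v : V} (hv : v ∈ D) :
    ∃ T, IsTriangle G T ∧ v ∈ T ∧ T ⊆ D := by
  obtain ⟨a, b, c, d, -, hac, had, hbc, hbd, hcd, -, h₁, h₂, h₃, h₄, h₅, rfl⟩ := hD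
  have hacd : IsTriangle G {a, c, d} := ⟨a, c, d, hac, had, hcd, h₁, h₂, h₅, rfl⟩
  have hbcd : IsTriangle G {b, c, d} := ⟨b, c, d, hbc, hbd, hcd, h₃, h₄, h₅, rfl⟩
  have hacdD : {a, c, d} ⊆ ({a, b, c, d} : Set V) := by simp [insert_subset_iff]
  have hbcdD : {b, c, d} ⊆ ({a, b, c, d} : Set V) := by simp
  rcases hv with rfl | rfl | rfl | rfl
  · exact ⟨_, hacd, by simp, hacdD⟩
  · exact ⟨_, hbcd, by simp, hbcdD⟩
  all_goals exact ⟨_, hacd, by simp, hacdD⟩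

theorem subset_of_isTriangle (hD : IsDiamond G D)
    (hcub : ∀ v : V, (G.neighborSet v).ncard = 3) {T : Set V} (hT : IsTriangle G T)
    {v : V} (hvD : v ∈ D) (hvT : v ∈ T) : T ⊆ D := by
  obtain ⟨a, b, c, d, hab, hac, had, hbc, hbd, hcd, -, h₁, h₂, h₃, h₄, h₅, rfl⟩ := hD
  -- `T` contains `c` or `d`, whose closed neighbourhoods are the whole diamond
  have hcdT : c ∈ T ∨ d ∈ T := by
    rcases hvD with rfl | rfl | rfl | rfl
    · exact hT.mem_or_mem_of_adj hvT (hcub _) h₁ h₂ hcd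
    · exact hT.mem_or_mem_of_adj hvT (hcub _) h₃ h₄ hcd
    · exact Or.inl hvT
    · exact Or.inr hvT
  rcases hcdT with hc | hd
  · refine (hT.subset_insert_neighborSet hc).trans ?_
    rw [neighborSet_eq_of_ncard_eq_three (hcub c) hab had hbd h₁.symm h₃.symm h₅]
    simp [insert_subset_iff]
  · refine (hT.subset_insert_neighborSet hd).trans ?_
    rw [neighborSet_eq_of_ncard_eq_three (hcub d) hab hac hbc h₂.symm h₄.symm h₅.symm]
    simp [insert_subset_iff]

theorem eq_of_mem (hD₁ : IsDiamond G D) (hcub : ∀ v : V, (G.neighborSet v).ncard = 3)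
    {D' : Set V} (hD₂ : IsDiamond G D') {v : V} (hv₁ : v ∈ D) (hv₂ : v ∈ D') : D = D' := by
  obtain ⟨T, hT, hvT, hTD₁⟩ := hD₁.exists_isTriangle_subset hv₁
  have hTD₂ := hD₂.subset_of_isTriangle hcub hT hv₂ hvT
  refine eq_of_subset_of_ncard_le (fun u hu => ?_) (by rw [hD₁.ncard, hD₂.ncard]) hD₂.finite
  obtain ⟨Tu, hTu, huTu, hTuD₁⟩ := hD₁.exists_isTriangle_subset hu
  obtain ⟨z, hzTu, hzT⟩ := inter_nonempty_of_ncard_lt_ncard_add_ncard hTuD₁ hTD₁ hD₁.finite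
    (by rw [hD₁.ncard, hTu.ncard, hT.ncard]; norm_num)
  exact hD₂.subset_of_isTriangle hcub hTu (hTD₂ hzT) hzTu huTu

end IsDiamond

theorem exists_isDiamond_of_isTriangle (hconn : G.Connected)
    (hcub : ∀ v : V, (G.neighborSet v).ncard = 3)
    (hK4 : ¬ Nonempty (G ≃g (⊤ : SimpleGraph (Fin 4)))) {T₁ T₂ : Set V}
    (hT₁ : IsTriangle G T₁) (hT₂ : IsTriangle G T₂) {v : V} (hv₁ : v ∈ T₁) (hv₂ : v ∈ T₂)
    (hne : T₁ ≠ T₂) : ∃ D, IsDiamond G D ∧ T₁ ⊆ D ∧ T₂ ⊆ D := by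
  obtain ⟨x, ⟨hx₁, hxv⟩, hx₂, -⟩ := inter_nonempty_of_ncard_lt_ncard_add_ncard
    (hT₁.diff_singleton_subset_neighborSet hv₁) (hT₂.diff_singleton_subset_neighborSet hv₂)
    (finite_of_ncard_ne_zero (by rw [hcub]; norm_num))
    (by rw [hcub, hT₁.ncard_diff_singleton hv₁, hT₂.ncard_diff_singleton hv₂]; norm_num)
  have hvx : v ≠ x := Ne.symm hxv
  obtain ⟨y, hyv, hyx, rfl⟩ := hT₁.exists_third hv₁ hx₁ hvx
  obtain ⟨u, huv, hux, rfl⟩ := hT₂.exists_third hv₂ hx₂ hvx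
  have huy : u ≠ y := by rintro rfl; exact hne rfl
  have hnuy : ¬ G.Adj u y := fun huy' => hK4 <|
    nonempty_iso_top_of_isClique hconn hcub
      (isClique_insert.2 ⟨hT₁.isClique, fun w hw _ => by
        rcases hw with rfl | rfl | rfl
        exacts [hT₂.adj (by simp) (by simp) huv, hT₂.adj (by simp) (by simp) hux, huy']⟩)
      (by rw [ncard_insert_of_notMem (by simp [huv, hux, huy]), hT₁.ncard])
  refine ⟨{u, y, v, x}, ⟨u, y, v, x, huy, huv, hux, hyv, hyx, hvx, hnuy,
    hT₂.adj (by simp) (by simp) huv, hT₂.adj (by simp) (by simp) hux,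
    hT₁.adj (by simp) (by simp) hyv, hT₁.adj (by simp) (by simp) hyx,
    hT₁.adj (by simp) (by simp) hvx, rfl⟩, ?_, ?_⟩ <;> simp [insert_subset_iff]

theorem IsTDPartition.eq_of_mem {P : Set (Set V)} (hP : IsTDPartition G P) {S S' : Set V}
    (hS : S ∈ P) (hS' : S' ∈ P) {v : V} (hv : v ∈ S) (hv' : v ∈ S') : S = S' :=
  (hP.2 v).unique ⟨hS, hv⟩ ⟨hS', hv'⟩

theorem IsTDPartition.eq_of_subset {P Q : Set (Set V)} (hQ : IsTDPartition G Q)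
    (hP : IsTDPartition G P) (hQP : Q ⊆ P) : Q = P := by
  refine hQP.antisymm fun S hS => ?_
  obtain ⟨v, hv⟩ : S.Nonempty := by
    rcases hP.1 S hS with h | h <;> exact nonempty_of_ncard_ne_zero (by simp [h.ncard])
  obtain ⟨U, ⟨hUQ, hvU⟩, -⟩ := hQ.2 v
  exact hP.eq_of_mem hS (hQP hUQ) hv hvU ▸ hUQ

theorem IsTDPartition.not_subset_isDiamond (hcub : ∀ v : V, (G.neighborSet v).ncard = 3)
    {Q : Set (Set V)} (hQ : IsTDPartition G Q) {T D : Set V} (hTQ : T ∈ Q)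
    (hT : IsTriangle G T) (hD : IsDiamond G D) : ¬ T ⊆ D := by
  intro hTD
  obtain ⟨b, hbD, hbT⟩ := exists_mem_notMem_of_ncard_lt_ncard
    (by rw [hT.ncard, hD.ncard]; norm_num : T.ncard < D.ncard) hT.finite
  obtain ⟨S, ⟨hSQ, hbS⟩, -⟩ := hQ.2 b
  have hSD : S ⊆ D ∧ 3 ≤ S.ncard := by
    rcases hQ.1 S hSQ with hS | hS
    · exact ⟨hD.subset_of_isTriangle hcub hS hbD hbS, hS.ncard.ge⟩
    · rw [hS.eq_of_mem hcub hD hbS hbD, hD.ncard]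
      exact ⟨subset_rfl, by norm_num⟩
  obtain ⟨z, hzS, hzT⟩ := inter_nonempty_of_ncard_lt_ncard_add_ncard hSD.1 hTD hD.finite
    (by rw [hD.ncard, hT.ncard]; omega)
  exact hbT (hQ.eq_of_mem hSQ hTQ hzS hzT ▸ hbS)

def tdBlocks (G : SimpleGraph V) : Set (Set V) :=
  {S | IsDiamond G S ∨ (IsTriangle G S ∧ ∀ D, IsDiamond G D → ¬ S ⊆ D)}

theorem eq_of_mem_tdBlocks (hconn : G.Connected) (hcub : ∀ v : V, (G.neighborSet v).ncard = 3)
    (hK4 : ¬ Nonempty (G ≃g (⊤ : SimpleGraph (Fin 4)))) {S S' : Set V} (hS : S ∈ tdBlocks G)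
    (hS' : S' ∈ tdBlocks G) {v : V} (hv : v ∈ S) (hv' : v ∈ S') : S = S' := by
  rcases hS with hD | ⟨hT, hTD⟩ <;> rcases hS' with hD' | ⟨hT', hTD'⟩
  · exact hD.eq_of_mem hcub hD' hv hv'
  · exact absurd (hD.subset_of_isTriangle hcub hT' hv hv') (hTD' S hD)
  · exact absurd (hD'.subset_of_isTriangle hcub hT hv' hv) (hTD S' hD')
  · by_contra hne
    obtain ⟨D, hD, hSD, -⟩ := exists_isDiamond_of_isTriangle hconn hcub hK4 hT hT' hv hv' hne
    exact hTD D hD hSD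

theorem isTDPartition_tdBlocks (hconn : G.Connected) (hcf : ClawFree G)
    (hcub : ∀ v : V, (G.neighborSet v).ncard = 3)
    (hK4 : ¬ Nonempty (G ≃g (⊤ : SimpleGraph (Fin 4)))) : IsTDPartition G (tdBlocks G) := by
  refine ⟨fun S hS => hS.symm.imp_left And.left, fun v => ?_⟩
  obtain ⟨T, hT, hvT⟩ := hcf.exists_isTriangle_mem (hcub v)
  have hblock : ∃ S ∈ tdBlocks G, v ∈ S := by
    by_cases hTD : ∃ D, IsDiamond G D ∧ T ⊆ D
    · obtain ⟨D, hD, hTD⟩ := hTD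
      exact ⟨D, Or.inl hD, hTD hvT⟩
    · exact ⟨T, Or.inr ⟨hT, fun D hD hTD' => hTD ⟨D, hD, hTD'⟩⟩, hvT⟩
  obtain ⟨S, hS, hvS⟩ := hblock
  exact ⟨S, ⟨hS, hvS⟩, fun S' ⟨hS', hvS'⟩ =>
    eq_of_mem_tdBlocks hconn hcub hK4 hS' hS hvS' hvS⟩

theorem IsTDPartition.subset_tdBlocks (hcub : ∀ v : V, (G.neighborSet v).ncard = 3)
    {Q : Set (Set V)} (hQ : IsTDPartition G Q) : Q ⊆ tdBlocks G := fun S hS =>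
  (hQ.1 S hS).symm.imp_right fun hT => ⟨hT, fun _ hD => hQ.not_subset_isDiamond hcub hS hT hD⟩

end

theorem stmt6_general {V : Type*} (G : SimpleGraph V)
    (hconn : G.Connected) (hcf : ClawFree G)
    (hcub : ∀ v : V, (G.neighborSet v).ncard = 3)
    (hK4 : ¬ Nonempty (G ≃g (⊤ : SimpleGraph (Fin 4)))) :
    ∃! P : Set (Set V), IsTDPartition G P :=
  ⟨tdBlocks G, isTDPartition_tdBlocks hconn hcf hcub hK4, fun _ hQ =>
    hQ.eq_of_subset (isTDPartition_tdBlocks hconn hcf hcub hK4) (hQ.subset_tdBlocks hcub)⟩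

theorem stmt6 {V : Type*} [Fintype V] (G : SimpleGraph V)
    (hconn : G.Connected) (hcf : ClawFree G)
    (hcub : ∀ v : V, (G.neighborSet v).ncard = 3)
    (hK4 : ¬ Nonempty (G ≃g (⊤ : SimpleGraph (Fin 4)))) :
    ∃! P : Set (Set V), IsTDPartition G P :=
  stmt6_general G hconn hcf hcub hK4
end

section
/- If G is a connected, claw-free, cubic graph in which every vertex lies in a triangle and G contains no diamond (so the triangle-diamond partition consists only of triangle-units), then α(G) = n(G)/3, and every maximum independent set of G contains exactly one vertex from every triangle of G. -/
open SimpleGraph Set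

variable {V : Type*}

/-! Every triangle of `G` is a part of `P`: a vertex of degree three has exactly one neighbour
outside any triangle through it, so a triangle meeting two parts would give one of its vertices two
neighbours outside its own part. An independent set meets each triangle at most once, whence
`α(G) ≤ n/3`, with equality only if it meets every part exactly once.

For `α(G) ≥ n/3`, every triangle has at least two leaving edges and every edge leaves at most two
triangles, so Hall's theorem assigns distinct leaving edges to the parts. The endpoints of these
edges inside their parts are independent: two adjacent ones would be joined by the unique leaving
edge at each of them, which would then be assigned to both parts. -/

theorem Nat.card_eq_mul_ncard_of_partition {α : Type*} [Finite α] {P : Set (Set α)}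
    (hP : ∀ a, ∃! S ∈ P, a ∈ S) {k : ℕ} (hk : ∀ S ∈ P, S.ncard = k) :
    Nat.card α = k * P.ncard := by
  have hcover : ⋃₀ P = univ := eq_univ_of_forall fun a => mem_sUnion.mpr (hP a).exists
  rw [← ncard_univ, ← hcover, sUnion_eq_biUnion,
    (toFinite P).ncard_biUnion (s := fun S => S) (fun _ _ => toFinite _)
      (Setoid.eqv_classes_disjoint hP),
    finsum_mem_congr rfl hk, ← finsum_one, mul_finsum_mem, mul_one]

theorem exists_injective_of_le_ncard_of_ncard_le {ι α : Type*} [Finite ι] [Finite α]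
    {r : ι → α → Prop} {k : ℕ} (hk : 0 < k) (hι : ∀ i, k ≤ {a | r i a}.ncard)
    (hα : ∀ a, {i | r i a}.ncard ≤ k) :
    ∃ f : ι → α, Function.Injective f ∧ ∀ i, r i (f i) := by
  classical
  have := Fintype.ofFinite ι
  have := Fintype.ofFinite α
  refine (Fintype.all_card_le_filter_rel_iff_exists_injective r).mp fun A => ?_
  -- Hall's condition by double counting the pairs `(i, a)` with `i ∈ A` and `r i a`.
  refine Nat.le_of_mul_le_mul_right
    (Finset.card_mul_le_card_mul r (fun i hi => ?_) fun a _ => ?_) hk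
  · calc k ≤ {a | r i a}.ncard := hι i
      _ = (Finset.univ.filter (r i)).card := by rw [ncard_eq_toFinset_card', toFinset_ofPred]
      _ ≤ _ := Finset.card_le_card fun a ha => by
        rw [Finset.mem_filter_univ] at ha
        exact (Finset.mem_bipartiteAbove r).mpr
          ⟨(Finset.mem_filter_univ _).mpr ⟨i, hi, ha⟩, ha⟩
  · calc (A.bipartiteBelow r a).card ≤ (Finset.univ.filter (r · a)).card :=
          Finset.card_le_card fun i hi =>
            (Finset.mem_filter_univ i).mpr ((Finset.mem_bipartiteBelow r).mp hi).2
      _ = {i | r i a}.ncard := by rw [ncard_eq_toFinset_card', toFinset_ofPred]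
      _ ≤ k := hα a

section CliqueCover

variable {G : SimpleGraph V}

lemma indepNumber_eq_of_forall_ncard_le {k : ℕ} (hex : ∃ I, IsIndep G I ∧ I.ncard = k)
    (hle : ∀ I, IsIndep G I → I.ncard ≤ k) : indepNumber G = k := by
  obtain ⟨I, hI, rfl⟩ := hex
  exact IsGreatest.csSup_eq ⟨⟨I, rfl, hI⟩, by rintro _ ⟨J, rfl, hJ⟩; exact hle J hJ⟩

variable [Finite V] {I : Set V} {Q : Set (Set V)}

lemma IsIndep.ncard_inter_le_one {S : Set V} (hI : IsIndep G I) (hS : G.IsClique S) :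
    (I ∩ S).ncard ≤ 1 :=
  (ncard_le_one (toFinite _)).mpr fun _ hu _ hw =>
    by_contra fun h => hI hu.1 hw.1 h (hS hu.2 hw.2 h)

lemma IsIndep.ncard_le_ncard_of_subset_sUnion (hI : IsIndep G I) (hQ : ∀ S ∈ Q, G.IsClique S)
    (hIQ : I ⊆ ⋃₀ Q) : I.ncard ≤ Q.ncard := by
  have hcover : ∀ v, ∃ S, v ∈ I → S ∈ Q ∧ v ∈ S := fun v => by
    by_cases hv : v ∈ I
    · obtain ⟨S, hS, hvS⟩ := hIQ hv
      exact ⟨S, fun _ => ⟨hS, hvS⟩⟩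
    · exact ⟨∅, fun h => absurd h hv⟩
  choose f hf using hcover
  refine ncard_le_ncard_of_injOn f (fun v hv => (hf v hv).1) fun u hu w hw huw => ?_
  by_contra h
  exact hI hu hw h (hQ _ (hf u hu).1 (hf u hu).2 (huw ▸ (hf w hw).2) h)

lemma IsIndep.ncard_inter_eq_one_of_ncard_eq (hI : IsIndep G I) (hQ : ∀ S ∈ Q, G.IsClique S)
    (hIQ : I ⊆ ⋃₀ Q) (hcard : I.ncard = Q.ncard) {S : Set V} (hS : S ∈ Q) :
    (I ∩ S).ncard = 1 := by
  refine (hI.ncard_inter_le_one (hQ S hS)).antisymm (Nat.one_le_iff_ne_zero.mpr ?_)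
  intro h
  have hIQ' : I ⊆ ⋃₀ (Q \ {S}) := fun v hv => by
    obtain ⟨S', hS', hvS'⟩ := hIQ hv
    refine ⟨S', ⟨hS', fun hS'S => ?_⟩, hvS'⟩
    rw [ncard_eq_zero] at h
    exact h.subset ⟨hv, hS'S ▸ hvS'⟩
  have := hI.ncard_le_ncard_of_subset_sUnion (fun S' hS' => hQ S' hS'.1) hIQ'
  have := ncard_sdiff_singleton_lt_of_mem hS
  omega

end CliqueCover

section TrianglePartition

variable {G : SimpleGraph V} {P : Set (Set V)}

lemma IsTriangle.isClique_s7 {T : Set V} (hT : IsTriangle G T) : G.IsClique T := by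
  obtain ⟨a, b, c, -, -, -, hab, hac, hbc, rfl⟩ := hT
  simp [isClique_insert, hab, hac, hbc]

lemma IsTriangle.ncard_eq_three {T : Set V} (hT : IsTriangle G T) : T.ncard = 3 := by
  obtain ⟨a, b, c, hab, hac, hbc, -, -, -, rfl⟩ := hT
  exact Set.ncard_eq_three.mpr ⟨a, b, c, hab, hac, hbc, rfl⟩

variable [Finite V]

lemma IsTriangle.existsUnique_adj_notMem {T : Set V} {v : V} (hT : IsTriangle G T) (hv : v ∈ T)
    (hdeg : (G.neighborSet v).ncard = 3) : ∃! w, G.Adj v w ∧ w ∉ T := by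
  have hsub : T \ {v} ⊆ G.neighborSet v := fun w hw => hT.isClique_s7 hv hw.1 (Ne.symm hw.2)
  have hout : G.neighborSet v \ T = G.neighborSet v \ (T \ {v}) := by
    rw [sdiff_sdiff_right, inter_singleton_eq_empty.mpr (G.notMem_neighborSet_self), union_empty]
  have hcard : (G.neighborSet v \ T).ncard = 1 := by
    rw [hout, ncard_sdiff hsub, ncard_sdiff_singleton_of_mem hv, hT.ncard_eq_three, hdeg]
  obtain ⟨w, hw⟩ := ncard_eq_one.mp hcard
  exact ⟨w, (hw ▸ mem_singleton w : w ∈ G.neighborSet v \ T),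
    fun u hu => (hw ▸ hu : u ∈ ({w} : Set V))⟩

def IsLeavingEdge (G : SimpleGraph V) (S : Set V) (e : Sym2 V) : Prop :=
  ∃ v ∈ S, ∃ w ∉ S, G.Adj v w ∧ s(v, w) = e

lemma IsTriangle.two_le_ncard_isLeavingEdge {T : Set V} (hT : IsTriangle G T)
    (hcub : ∀ v, (G.neighborSet v).ncard = 3) : 2 ≤ {e | IsLeavingEdge G T e}.ncard := by
  obtain ⟨a, b, ha, hb, hab⟩ :=
    (one_lt_ncard_iff (toFinite T)).mp (by rw [hT.ncard_eq_three]; norm_num)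
  obtain ⟨wa, ⟨hawa, hwa⟩, -⟩ := hT.existsUnique_adj_notMem ha (hcub a)
  obtain ⟨wb, ⟨hbwb, hwb⟩, -⟩ := hT.existsUnique_adj_notMem hb (hcub b)
  refine (one_lt_ncard_iff (toFinite _)).mpr ⟨s(a, wa), s(b, wb), ⟨a, ha, wa, hwa, hawa, rfl⟩,
    ⟨b, hb, wb, hwb, hbwb, rfl⟩, fun h => ?_⟩
  rcases Sym2.eq_iff.mp h with ⟨hab', -⟩ | ⟨rfl, -⟩
  · exact hab hab'
  · exact hwb ha

lemma ncard_isLeavingEdge_le_two (hP : ∀ v, ∃! S ∈ P, v ∈ S) (e : Sym2 V) :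
    {S : P | IsLeavingEdge G S e}.ncard ≤ 2 := by
  have hunique : ∀ u, {S : P | u ∈ (S : Set V)}.ncard ≤ 1 := fun u =>
    (ncard_le_one (toFinite _)).mpr fun S hS S' hS' =>
      Subtype.ext (Setoid.eq_of_mem_eqv_class hP S.2 hS S'.2 hS')
  induction e using Sym2.ind with
  | h v w =>
    have hsub : {S : P | IsLeavingEdge G S s(v, w)} ⊆
        {S : P | v ∈ (S : Set V)} ∪ {S | w ∈ (S : Set V)} := by
      rintro S ⟨x, hx, y, -, -, hxy⟩
      rcases Sym2.eq_iff.mp hxy with ⟨rfl, -⟩ | ⟨rfl, -⟩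
      · exact Or.inl hx
      · exact Or.inr hx
    calc _ ≤ _ := ncard_le_ncard hsub (toFinite _)
      _ ≤ _ := ncard_union_le _ _
      _ ≤ 1 + 1 := add_le_add (hunique v) (hunique w)

variable (hcub : ∀ v, (G.neighborSet v).ncard = 3) (hP : ∀ v, ∃! S ∈ P, v ∈ S)
  (hPtri : ∀ S ∈ P, IsTriangle G S)
include hcub hP hPtri

lemma mem_of_adj_of_adj {S : Set V} {a b c : V} (hS : S ∈ P) (ha : a ∈ S) (hab : G.Adj a b)
    (hac : G.Adj a c) (hbc : G.Adj b c) : b ∈ S := by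
  by_contra hb
  obtain ⟨S', ⟨hS', hbS'⟩, -⟩ := hP b
  have hdisj : ∀ {x}, x ∈ S → x ∉ S' := fun hx hx' =>
    hb (Setoid.eq_of_mem_eqv_class hP hS' hx' hS hx ▸ hbS')
  have hc : c ∈ S := by
    by_contra hc
    exact hbc.ne (((hPtri S hS).existsUnique_adj_notMem ha (hcub a)).unique
      ⟨hab, hb⟩ ⟨hac, hc⟩)
  exact hac.ne (((hPtri S' hS').existsUnique_adj_notMem hbS' (hcub b)).unique
    ⟨hab.symm, hdisj ha⟩ ⟨hbc, hdisj hc⟩)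

theorem mem_of_isTriangle {T : Set V} (hT : IsTriangle G T) : T ∈ P := by
  obtain ⟨a, b, c, -, -, -, hab, hac, hbc, hTabc⟩ := id hT
  obtain ⟨S, ⟨hS, haS⟩, -⟩ := hP a
  have hTS : T ⊆ S := hTabc ▸ insert_subset haS (pair_subset
    (mem_of_adj_of_adj hcub hP hPtri hS haS hab hac hbc)
    (mem_of_adj_of_adj hcub hP hPtri hS haS hac hab hbc.symm))
  rwa [eq_of_subset_of_ncard_le hTS (by rw [hT.ncard_eq_three, (hPtri S hS).ncard_eq_three])]

theorem exists_isIndep_ncard_eq : ∃ I, IsIndep G I ∧ I.ncard = P.ncard := by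
  obtain ⟨f, hf, hfP⟩ :=
    exists_injective_of_le_ncard_of_ncard_le (r := fun (S : P) => IsLeavingEdge G S) two_pos
      (fun S => (hPtri S S.2).two_le_ncard_isLeavingEdge hcub) (ncard_isLeavingEdge_le_two hP)
  choose g hg w hw hgw hfg using hfP
  have hnotMem : ∀ {S S' : P}, S ≠ S' → g S' ∉ (S : Set V) := fun {S S'} hSS' h =>
    hSS' (Subtype.ext (Setoid.eq_of_mem_eqv_class hP S.2 h S'.2 (hg _)))
  have hinj : Function.Injective g := fun S S' h => by
    by_contra hSS'
    exact hnotMem hSS' (h ▸ hg S)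
  refine ⟨range g, ?_, by rw [ncard_range_of_injective hinj, Nat.card_coe_set_eq]⟩
  rintro _ ⟨S, rfl⟩ _ ⟨S', rfl⟩ hne hadj
  have hSS' : S ≠ S' := fun h => hne (h ▸ rfl)
  have h₁ : w S = g S' := ((hPtri S S.2).existsUnique_adj_notMem (hg S) (hcub _)).unique
    ⟨hgw S, hw S⟩ ⟨hadj, hnotMem hSS'⟩
  have h₂ : w S' = g S := ((hPtri S' S'.2).existsUnique_adj_notMem (hg S') (hcub _)).unique
    ⟨hgw S', hw S'⟩ ⟨hadj.symm, hnotMem hSS'.symm⟩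
  exact hSS' (hf (by rw [← hfg, ← hfg, h₁, h₂, Sym2.eq_swap]))

end TrianglePartition

theorem stmt7_general {V : Type*} [Fintype V] (G : SimpleGraph V)
    (hcub : ∀ v : V, (G.neighborSet v).ncard = 3)
    (hP : ∃ P : Set (Set V), IsTDPartition G P ∧ ∀ S ∈ P, IsTriangle G S) :
    3 * indepNumber G = Fintype.card V ∧
    ∀ I : Set V, IsIndep G I → I.ncard = indepNumber G →
      ∀ T : Set V, IsTriangle G T → (I ∩ T).ncard = 1 := by
  obtain ⟨P, ⟨-, hpart⟩, hPtri⟩ := hP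
  have hclique : ∀ S ∈ P, G.IsClique S := fun S hS => (hPtri S hS).isClique_s7
  have hcover : ∀ I : Set V, I ⊆ ⋃₀ P := fun _ v _ => mem_sUnion.mpr (hpart v).exists
  have hα : indepNumber G = P.ncard := indepNumber_eq_of_forall_ncard_le
    (exists_isIndep_ncard_eq hcub hpart hPtri)
    fun I hI => hI.ncard_le_ncard_of_subset_sUnion hclique (hcover I)
  refine ⟨?_, fun I hI hIα T hT => ?_⟩
  · rw [hα, ← Nat.card_eq_fintype_card,
      Nat.card_eq_mul_ncard_of_partition hpart fun S hS => (hPtri S hS).ncard_eq_three]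
  · exact hI.ncard_inter_eq_one_of_ncard_eq hclique (hcover I) (hIα.trans hα)
      (mem_of_isTriangle hcub hpart hPtri hT)

theorem stmt7 {V : Type*} [Fintype V] (G : SimpleGraph V)
    (hconn : G.Connected) (hcf : ClawFree G)
    (hcub : ∀ v : V, (G.neighborSet v).ncard = 3)
    (htri : ∀ v : V, ∃ T : Set V, IsTriangle G T ∧ v ∈ T)
    (hdia : ¬ ∃ D : Set V, IsDiamond G D)
    (hP : ∃ P : Set (Set V), IsTDPartition G P ∧ ∀ S ∈ P, IsTriangle G S) :
    3 * indepNumber G = Fintype.card V ∧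
    ∀ I : Set V, IsIndep G I → I.ncard = indepNumber G →
      ∀ T : Set V, IsTriangle G T → (I ∩ T).ncard = 1 :=
  stmt7_general G hcub hP
end

section
/- If G is a connected, claw-free, cubic graph, then σ_{(3,2)}(G) = β(G), i.e., the minimum size of a (3,2)-spreading set equals the vertex cover number of G. -/
open SimpleGraph Set

variable {V : Type*}

/-!
A white vertex of degree at most `p` with a white neighbor never has `p` blue neighbors, so an
edge with both ends white stays white forever: every (3,2)-spreading set of a cubic graph is a
vertex cover. Conversely, if `S` is a vertex cover then every white vertex `w` has its three
neighbors blue, and claw-freeness makes two of them, `a` and `b`, adjacent; `a` then has the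
blue neighbor `b`, hence at most two white neighbors, so `w` turns blue in a single step.
The two minimisation problems therefore range over the same sets.
-/

variable {G : SimpleGraph V}

lemma ncard_neighborSet_inter_lt_s10 {x y : V} {T : Set V} (hfin : (G.neighborSet x).Finite)
    (hxy : G.Adj x y) (hy : y ∉ T) :
    (G.neighborSet x ∩ T).ncard < (G.neighborSet x).ncard :=
  ncard_lt_ncard (inter_ssubset_left_iff.mpr fun h => hy (h hxy)) hfin

lemma not_mem_spreadStep_of_adj {p : ℕ} {q : ℕ∞} {B : Set V} {x y : V}
    (hfin : (G.neighborSet x).Finite) (hdeg : (G.neighborSet x).ncard ≤ p)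
    (hxy : G.Adj x y) (hx : x ∉ B) (hy : y ∉ B) : x ∉ spreadStep G p q B := by
  rintro (hxB | ⟨hp, -⟩)
  · exact hx hxB
  · exact (hdeg.trans hp).not_gt (ncard_neighborSet_inter_lt_s10 hfin hxy hy)

lemma IsSpreadingSet.isVertexCover {p : ℕ} {q : ℕ∞} {S : Set V}
    (hfin : ∀ v, (G.neighborSet v).Finite) (hdeg : ∀ v, (G.neighborSet v).ncard ≤ p)
    (hS : IsSpreadingSet G p q S) : _root_.IsVertexCover G S := by
  obtain ⟨n, hn⟩ := hS
  intro u v huv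
  by_contra! h
  have stays_white : ∀ m, u ∉ (spreadStep G p q)^[m] S ∧ v ∉ (spreadStep G p q)^[m] S := by
    intro m
    induction m with
    | zero => exact h
    | succ m ih =>
      rw [Function.iterate_succ_apply']
      exact ⟨not_mem_spreadStep_of_adj (hfin u) (hdeg u) huv ih.1 ih.2,
        not_mem_spreadStep_of_adj (hfin v) (hdeg v) huv.symm ih.2 ih.1⟩
  exact (stays_white n).1 (hn ▸ mem_univ u)

lemma ClawFree.exists_adj_of_ncard_neighborSet_eq_three (hcf : ClawFree G) {w : V}
    (hw : (G.neighborSet w).ncard = 3) : ∃ a b, G.Adj w a ∧ G.Adj w b ∧ G.Adj a b := by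
  obtain ⟨a, b, c, hab, hac, hbc, habc⟩ := ncard_eq_three.mp hw
  have hwa : G.Adj w a := show a ∈ G.neighborSet w by simp [habc]
  have hwb : G.Adj w b := show b ∈ G.neighborSet w by simp [habc]
  have hwc : G.Adj w c := show c ∈ G.neighborSet w by simp [habc]
  by_cases h₁ : G.Adj a b
  · exact ⟨a, b, hwa, hwb, h₁⟩
  by_cases h₂ : G.Adj a c
  · exact ⟨a, c, hwa, hwc, h₂⟩
  by_cases h₃ : G.Adj b c
  · exact ⟨b, c, hwb, hwc, h₃⟩
  exact absurd ⟨w, a, b, c, hab, hac, hbc, hwa, hwb, hwc, h₁, h₂, h₃⟩ hcf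

lemma IsVertexCover.isSpreadingSet_three_two (hcf : ClawFree G)
    (hcub : ∀ v, (G.neighborSet v).ncard = 3) {S : Set V} (hS : _root_.IsVertexCover G S) :
    IsSpreadingSet G 3 2 S := by
  refine ⟨1, eq_univ_of_forall fun w => ?_⟩
  by_cases hw : w ∈ S
  · exact Or.inl hw
  have hN : G.neighborSet w ⊆ S := fun x hx => (hS hx).resolve_left hw
  obtain ⟨a, b, hwa, hwb, hab⟩ := hcf.exists_adj_of_ncard_neighborSet_eq_three (hcub w)
  refine Or.inr ⟨by rw [inter_eq_left.mpr hN, hcub w], a, ⟨hwa, hN hwa⟩, ?_⟩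
  have hwhite := ncard_neighborSet_inter_lt_s10 (T := Sᶜ)
    (finite_of_ncard_pos (by rw [hcub a]; norm_num)) hab (not_not_intro (hN hwb))
  rw [← sdiff_eq, hcub a] at hwhite
  exact_mod_cast Nat.le_of_lt_succ hwhite

theorem stmt10_general {V : Type*} (G : SimpleGraph V)
    (hcf : ClawFree G)
    (hcub : ∀ v : V, (G.neighborSet v).ncard = 3) :
    spreadNumber G 3 2 = coverNumber G := by
  have hfin : ∀ v, (G.neighborSet v).Finite :=
    fun v => finite_of_ncard_pos (by rw [hcub v]; norm_num)
  have hiff : ∀ S, IsSpreadingSet G 3 2 S ↔ _root_.IsVertexCover G S := fun S =>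
    ⟨IsSpreadingSet.isVertexCover hfin (fun v => (hcub v).le),
      IsVertexCover.isSpreadingSet_three_two hcf hcub⟩
  simp only [spreadNumber, coverNumber, hiff]

theorem stmt10 {V : Type*} [Fintype V] (G : SimpleGraph V)
    (hconn : G.Connected) (hcf : ClawFree G)
    (hcub : ∀ v : V, (G.neighborSet v).ncard = 3) :
    spreadNumber G 3 2 = coverNumber G :=
  stmt10_general G hcf hcub
end

section
/- For every k ≥ 2, the diamond-necklace N_k satisfies m(N_k, 2) = k + 1. -/
open SimpleGraph Set

variable {V : Type*}

/-!
If every vertex of a nonempty set `T` has fewer than `r` neighbours outside `T`, no vertex of `T`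
is ever the first of `T` to turn blue, so every `r`-percolating set meets `T`. In `N_k` the two
triangles `a_i c_i d_i` and `b_i c_i d_i` of each diamond are such sets for `r = 2`. A percolating
set with at most `k` vertices thus meets every diamond exactly once, in `c_i` or `d_i`; but then
each vertex outside it has at most one neighbour in it, so it cannot grow at all.
Conversely `{c_1, …, c_k, d_1}` percolates: `b_1` turns blue, and then
`b_i → d_i → a_i → b_{i+1}` runs around the necklace.
-/

open Function

section Percolation

variable {W : Type*} {G : SimpleGraph W} {r : ℕ} {S T : Set W}

lemma subset_percStep (B : Set W) : B ⊆ percStep G r B :=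
  subset_union_left

lemma monotone_iterate_percStep (S : Set W) : Monotone fun n => (percStep G r)^[n] S :=
  monotone_nat_of_le_succ fun n => by
    rw [iterate_succ_apply']
    exact subset_percStep _

def percClosure (G : SimpleGraph W) (r : ℕ) (S : Set W) : Set W :=
  ⋃ n, (percStep G r)^[n] S

lemma subset_percClosure : S ⊆ percClosure G r S :=
  subset_iUnion (fun n => (percStep G r)^[n] S) 0

lemma mem_percClosure_of_adj [Finite W] {v u w : W} (huw : u ≠ w) (hu : G.Adj v u)
    (hw : G.Adj v w) (hu' : u ∈ percClosure G 2 S) (hw' : w ∈ percClosure G 2 S) :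
    v ∈ percClosure G 2 S := by
  obtain ⟨m, hm⟩ := mem_iUnion.1 hu'
  obtain ⟨n, hn⟩ := mem_iUnion.1 hw'
  set B := (percStep G 2)^[max m n] S
  have hpair : {u, w} ⊆ G.neighborSet v ∩ B := by
    rintro x (rfl | rfl)
    · exact ⟨hu, monotone_iterate_percStep S (le_max_left m n) hm⟩
    · exact ⟨hw, monotone_iterate_percStep S (le_max_right m n) hn⟩
  refine mem_iUnion.2 ⟨max m n + 1, ?_⟩
  rw [iterate_succ_apply']
  refine mem_union_right B ?_
  calc 2 = ({u, w} : Set W).ncard := (ncard_pair huw).symm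
    _ ≤ (G.neighborSet v ∩ B).ncard := ncard_le_ncard hpair

lemma isPercolating_of_percClosure_eq_univ [Finite W] (h : percClosure G r S = univ) :
    IsPercolating G r S := by
  choose n hn using fun v => mem_iUnion.1 (h.symm ▸ mem_univ v : v ∈ percClosure G r S)
  obtain ⟨N, hN⟩ := (finite_range n).bddAbove
  exact ⟨N, eq_univ_of_forall fun v =>
    monotone_iterate_percStep S (hN (mem_range_self v)) (hn v)⟩

lemma disjoint_iterate_percStep [Finite W] (hST : Disjoint S T)
    (hT : ∀ v ∈ T, (G.neighborSet v \ T).ncard < r) (n : ℕ) :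
    Disjoint ((percStep G r)^[n] S) T := by
  induction n with
  | zero => exact hST
  | succ n ih =>
    rw [iterate_succ_apply']
    refine disjoint_union_left.2 ⟨ih, disjoint_left.2 fun v hv hvT => ?_⟩
    have hsub : G.neighborSet v ∩ (percStep G r)^[n] S ⊆ G.neighborSet v \ T :=
      fun w hw => ⟨hw.1, disjoint_left.1 ih hw.2⟩
    exact (hv.trans (ncard_le_ncard hsub)).not_gt (hT v hvT)

lemma IsPercolating.inter_nonempty [Finite W] (hS : IsPercolating G r S) (hT : T.Nonempty)
    (hout : ∀ v ∈ T, (G.neighborSet v \ T).ncard < r) : (S ∩ T).Nonempty := by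
  obtain ⟨n, hn⟩ := hS
  by_contra hST
  have hdisj := disjoint_iterate_percStep
    (disjoint_iff_inter_eq_empty.2 (not_nonempty_iff_eq_empty.1 hST)) hout n
  rw [hn, univ_disjoint] at hdisj
  exact hT.ne_empty hdisj

lemma percNumber_eq {n : ℕ} (hex : ∃ S : Set W, S.ncard = n ∧ IsPercolating G r S)
    (hle : ∀ S : Set W, IsPercolating G r S → n ≤ S.ncard) : percNumber G r = n := by
  obtain ⟨S, hS, hperc⟩ := hex
  refine le_antisymm (Nat.sInf_le ⟨S, hS, hperc⟩) (le_csInf ⟨n, S, hS, hperc⟩ ?_)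
  rintro m ⟨S', rfl, hS'⟩
  exact hle S' hS'

end Percolation

section Necklace

variable {k : ℕ}

lemma diamondNecklace_neighborSet_zero (i : ZMod k) :
    (diamondNecklace k).neighborSet (i, 0) = {(i, 2), (i, 3), (i + 1, 1)} := by
  ext ⟨j, t⟩
  fin_cases t <;> simp [diamondNecklace, eq_comm]

lemma diamondNecklace_neighborSet_one (i : ZMod k) :
    (diamondNecklace k).neighborSet (i, 1) = {(i, 2), (i, 3), (i - 1, 0)} := by
  ext ⟨j, t⟩
  fin_cases t <;> simp [diamondNecklace, eq_comm, eq_sub_iff_add_eq]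

lemma diamondNecklace_neighborSet_two (i : ZMod k) :
    (diamondNecklace k).neighborSet (i, 2) = {(i, 0), (i, 1), (i, 3)} := by
  ext ⟨j, t⟩
  fin_cases t <;> simp [diamondNecklace, eq_comm]

lemma diamondNecklace_neighborSet_three (i : ZMod k) :
    (diamondNecklace k).neighborSet (i, 3) = {(i, 0), (i, 1), (i, 2)} := by
  ext ⟨j, t⟩
  fin_cases t <;> simp [diamondNecklace, eq_comm]

lemma diamondNecklace_fst_eq_of_adj {v w : ZMod k × Fin 4} (h : (diamondNecklace k).Adj v w)
    (hw : w.2 = 2 ∨ w.2 = 3) : v.1 = w.1 := by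
  rcases hw with hw | hw <;> simp_all [diamondNecklace, eq_comm]

lemma IsPercolating.diamondNecklace_meets_triangles [NeZero k] {S : Set (ZMod k × Fin 4)}
    (hS : IsPercolating (diamondNecklace k) 2 S) (i : ZMod k) :
    (S ∩ {(i, 0), (i, 2), (i, 3)}).Nonempty ∧ (S ∩ {(i, 1), (i, 2), (i, 3)}).Nonempty := by
  have hlt : ∀ {s : Set (ZMod k × Fin 4)} (x), s ⊆ {x} → s.ncard < 2 := fun x h =>
    (ncard_le_ncard h).trans_lt (by simp)
  constructor
  · refine hS.inter_nonempty ⟨(i, 0), by simp⟩ ?_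
    rintro v (rfl | rfl | rfl)
    · exact hlt (i + 1, 1) (by rw [diamondNecklace_neighborSet_zero]; aesop)
    · exact hlt (i, 1) (by rw [diamondNecklace_neighborSet_two]; aesop)
    · exact hlt (i, 1) (by rw [diamondNecklace_neighborSet_three]; aesop)
  · refine hS.inter_nonempty ⟨(i, 1), by simp⟩ ?_
    rintro v (rfl | rfl | rfl)
    · exact hlt (i - 1, 0) (by rw [diamondNecklace_neighborSet_one]; aesop)
    · exact hlt (i, 0) (by rw [diamondNecklace_neighborSet_two]; aesop)
    · exact hlt (i, 0) (by rw [diamondNecklace_neighborSet_three]; aesop)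

lemma IsPercolating.diamondNecklace_ncard_ge [NeZero k] {S : Set (ZMod k × Fin 4)}
    (hS : IsPercolating (diamondNecklace k) 2 S) : k + 1 ≤ S.ncard := by
  by_contra! hlt
  have hmeet := hS.diamondNecklace_meets_triangles
  have hsurj : Prod.fst '' S = univ := eq_univ_of_forall fun i => by
    obtain ⟨v, hv, hvi⟩ := (hmeet i).1
    exact ⟨v, hv, by rcases hvi with rfl | rfl | rfl <;> rfl⟩
  have hinj : InjOn Prod.fst S := injOn_of_ncard_image_eq <| le_antisymm ncard_image_le <| by
    rw [hsurj, ncard_univ, Nat.card_zmod]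
    omega
  have hcd : ∀ v ∈ S, v.2 = 2 ∨ v.2 = 3 := by
    rintro ⟨i, t⟩ hv
    obtain ⟨x, hx, hxA⟩ := (hmeet i).1
    obtain ⟨y, hy, hyB⟩ := (hmeet i).2
    have hxv : x = (i, t) := hinj hx hv (by rcases hxA with rfl | rfl | rfl <;> rfl)
    have hyv : y = (i, t) := hinj hy hv (by rcases hyB with rfl | rfl | rfl <;> rfl)
    subst hxv hyv
    simp only [mem_insert_iff, mem_singleton_iff, Prod.mk.injEq, true_and] at hxA hyB
    change t = 2 ∨ t = 3
    omega
  have hSc : (S ∩ Sᶜ).Nonempty := by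
    refine hS.inter_nonempty ⟨(0, 0), fun h => by simpa using hcd _ h⟩ fun v _ => ?_
    rw [sdiff_compl]
    refine Nat.lt_succ_of_le ((ncard_le_one_iff).2 fun {a b} ha hb => hinj ha.2 hb.2 ?_)
    exact (diamondNecklace_fst_eq_of_adj ha.1 (hcd a ha.2)).symm.trans
      (diamondNecklace_fst_eq_of_adj hb.1 (hcd b hb.2))
  simp at hSc

def necklaceSeed (k : ℕ) : Set (ZMod k × Fin 4) :=
  insert (0, 3) (range fun i => (i, 2))

lemma ncard_necklaceSeed [NeZero k] : (necklaceSeed k).ncard = k + 1 := by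
  have hinj : Injective fun i : ZMod k => ((i, 2) : ZMod k × Fin 4) :=
    fun a b hab => congrArg Prod.fst hab
  rw [necklaceSeed, ncard_insert_of_notMem (by simp), ← image_univ,
    hinj.injOn.ncard_image, ncard_univ, Nat.card_zmod]

lemma isPercolating_necklaceSeed [NeZero k] :
    IsPercolating (diamondNecklace k) 2 (necklaceSeed k) := by
  set C := percClosure (diamondNecklace k) 2 (necklaceSeed k)
  have hc : ∀ i, (i, 2) ∈ C := fun i => subset_percClosure (mem_insert_of_mem _ ⟨i, rfl⟩)
  have hd : ∀ i, (i, 1) ∈ C → (i, 3) ∈ C := fun i hb =>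
    mem_percClosure_of_adj (u := (i, 1)) (w := (i, 2)) (by simp) (by simp [diamondNecklace])
      (by simp [diamondNecklace]) hb (hc i)
  have ha : ∀ i, (i, 3) ∈ C → (i, 0) ∈ C := fun i hd =>
    mem_percClosure_of_adj (u := (i, 2)) (w := (i, 3)) (by simp) (by simp [diamondNecklace])
      (by simp [diamondNecklace]) (hc i) hd
  have hb : ∀ i, (i, 0) ∈ C → (i + 1, 1) ∈ C := fun i ha =>
    mem_percClosure_of_adj (u := (i + 1, 2)) (w := (i, 0)) (by simp) (by simp [diamondNecklace])
      (by simp [diamondNecklace]) (hc (i + 1)) ha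
  have hb₀ : ((0 : ZMod k), 1) ∈ C :=
    mem_percClosure_of_adj (u := (0, 2)) (w := (0, 3)) (by simp) (by simp [diamondNecklace])
      (by simp [diamondNecklace]) (hc 0) (subset_percClosure (mem_insert _ _))
  have hbn : ∀ n : ℕ, ((n : ZMod k), 1) ∈ C := by
    intro n
    induction n with
    | zero => simpa using hb₀
    | succ n ih => simpa using hb _ (ha _ (hd _ ih))
  have hball : ∀ i, (i, 1) ∈ C := fun i => by simpa using hbn i.val
  refine isPercolating_of_percClosure_eq_univ (eq_univ_of_forall ?_)
  rintro ⟨i, t⟩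
  fin_cases t
  exacts [ha i (hd i (hball i)), hball i, hc i, hd i (hball i)]

end Necklace

theorem stmt12 (k : ℕ) (hk : 2 ≤ k) :
    percNumber (diamondNecklace k) 2 = k + 1 := by
  have : NeZero k := ⟨by omega⟩
  exact percNumber_eq ⟨_, ncard_necklaceSeed, isPercolating_necklaceSeed⟩
    fun _ hS => hS.diamondNecklace_ncard_ge
end

section
/- If G is a connected, claw-free, cubic graph, then σ_{(2,3)}(G) ≤ σ_{(2,2)}(G) ≤ σ_{(2,3)}(G) + 1. -/
open SimpleGraph Set

variable {V : Type*}

/-! The edges of `G` lying in a triangle split a claw-free cubic graph into units (the connected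
components of `G.triangleGraph`: triangles, diamonds, or a whole `K_4`), and every vertex has at
most one neighbour outside its unit. So a unit without blue vertices never turns blue, and a
`(2,3)`-spreading set meets every unit. Conversely, under the `(2,2)` rule in a cubic graph a blue
triangle edge turns its whole unit blue, and a blue vertex `ℓ` with a blue neighbour turns a
neighbour `e` in another unit blue as soon as a triangle-neighbour of `e` is blue. Seeding, for
each unit, a triangle-neighbour of its vertex closest to a root `v₀`, together with `v₀` itself,
therefore spreads unit by unit in order of distance to `v₀`, and uses one vertex more than there
are units. The other inequality is monotonicity in `q`. -/

section Spreading

variable {G : SimpleGraph V} {p : ℕ} {q q' : ℕ∞}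

lemma spreadStep_monotone [Finite V] : Monotone (spreadStep G p q) := by
  rintro B B' hB w (hw | ⟨hcount, u, hu, hwhite⟩)
  · exact Or.inl (hB hw)
  · refine Or.inr ⟨hcount.trans (ncard_le_ncard (inter_subset_inter_right _ hB)), u,
      inter_subset_inter_right _ hB hu, le_trans ?_ hwhite⟩
    exact_mod_cast ncard_le_ncard (sdiff_subset_sdiff_right hB)

lemma spreadStep_mono_right (hq : q ≤ q') : spreadStep G p q ≤ spreadStep G p q' :=
  fun _ => union_subset_union_right _ fun _ ⟨hcount, u, hu, hwhite⟩ =>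
    ⟨hcount, u, hu, hwhite.trans hq⟩

lemma IsSpreadingSet.mono_right [Finite V] {S : Set V} (hq : q ≤ q')
    (hS : IsSpreadingSet G p q S) : IsSpreadingSet G p q' S := by
  obtain ⟨n, hn⟩ := hS
  exact ⟨n, eq_univ_of_univ_subset
    (hn ▸ spreadStep_monotone.iterate_le_of_le (spreadStep_mono_right hq) n S)⟩

lemma spreadNumber_le {S : Set V} (hS : IsSpreadingSet G p q S) :
    spreadNumber G p q ≤ S.ncard :=
  Nat.sInf_le ⟨S, rfl, hS⟩

lemma exists_isSpreadingSet_ncard_eq :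
    ∃ S : Set V, S.ncard = spreadNumber G p q ∧ IsSpreadingSet G p q S :=
  Nat.sInf_mem (s := {k | ∃ S : Set V, S.ncard = k ∧ IsSpreadingSet G p q S})
    ⟨_, univ, rfl, 0, rfl⟩

lemma spreadNumber_anti_right [Finite V] (hq : q ≤ q') :
    spreadNumber G p q' ≤ spreadNumber G p q := by
  obtain ⟨S, hcard, hS⟩ := exists_isSpreadingSet_ncard_eq (G := G) (p := p) (q := q)
  exact hcard ▸ spreadNumber_le (hS.mono_right hq)

lemma IsSpreadingSet.eq_univ_of_subset [Finite V] {S B : Set V} (hS : IsSpreadingSet G p q S)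
    (hSB : S ⊆ B) (hB : spreadStep G p q B ⊆ B) : B = univ := by
  obtain ⟨n, hn⟩ := hS
  have hfix : spreadStep G p q B = B := hB.antisymm subset_union_left
  rw [← Function.iterate_fixed hfix n, ← univ_subset_iff, ← hn]
  exact (spreadStep_monotone.iterate n) hSB

lemma isSpreadingSet_of_forall_closed [Finite V] {S : Set V}
    (h : ∀ B, S ⊆ B → spreadStep G p q B ⊆ B → B = univ) : IsSpreadingSet G p q S := by
  have hmono := Function.monotone_iterate_of_id_le (f := spreadStep G p q)
    fun _ => subset_union_left
  obtain ⟨n, hn⟩ := WellFoundedGT.monotone_chain_condition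
    ⟨fun n => (spreadStep G p q)^[n] S, fun _ _ h => hmono h S⟩
  refine ⟨n, h _ (Function.id_le_iterate_of_id_le (fun _ => subset_union_left) n S) ?_⟩
  rw [← Function.iterate_succ_apply' (spreadStep G p q)]
  exact (hn (n + 1) n.le_succ).ge

/-- The complement of a set `C` whose vertices have fewer than `p` neighbours outside `C` is
closed under the spreading rule. -/
lemma IsSpreadingSet.inter_nonempty [Finite V] {S C : Set V} (hS : IsSpreadingSet G p q S)
    (hC : C.Nonempty) (hout : ∀ w ∈ C, (G.neighborSet w \ C).ncard < p) : (S ∩ C).Nonempty := by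
  by_contra hSC
  have hclosed : spreadStep G p q Cᶜ ⊆ Cᶜ := by
    rintro w (hw | ⟨hcount, -⟩) hwC
    · exact hw hwC
    · exact (hcount.trans_lt (hout w hwC)).false
  obtain ⟨c, hc⟩ := hC
  have := hS.eq_univ_of_subset (fun s hs hsC => hSC ⟨s, hs, hsC⟩) hclosed
  exact eq_univ_iff_forall.1 this c hc

lemma mem_of_spreadStep_subset [Finite V] {B : Set V} (hB : spreadStep G 2 2 B ⊆ B)
    {w x y z : V} (hx : (G.neighborSet x).ncard ≤ 3) (hwx : G.Adj w x) (hwy : G.Adj w y)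
    (hxy : x ≠ y) (hxB : x ∈ B) (hyB : y ∈ B) (hxz : G.Adj x z) (hzB : z ∈ B) : w ∈ B := by
  refine hB (Or.inr ⟨(one_lt_ncard_iff).2 ⟨x, y, ⟨hwx, hxB⟩, ⟨hwy, hyB⟩, hxy⟩, x, ⟨hwx, hxB⟩, ?_⟩)
  have hblue : 0 < (G.neighborSet x ∩ B).ncard := (ncard_pos).2 ⟨z, hxz, hzB⟩
  have := ncard_inter_add_ncard_sdiff_eq_ncard (G.neighborSet x) B
  have hwhite : (G.neighborSet x \ B).ncard ≤ 2 := by omega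
  exact_mod_cast hwhite

end Spreading

namespace SimpleGraph

variable {G : SimpleGraph V}

def triangleGraph (G : SimpleGraph V) : SimpleGraph V where
  Adj u v := G.Adj u v ∧ ∃ w, G.Adj u w ∧ G.Adj v w
  symm := ⟨fun _ _ ⟨h, w, hu, hv⟩ => ⟨h.symm, w, hv, hu⟩⟩
  loopless := ⟨fun _ h => G.irrefl h.1⟩

@[simp]
lemma triangleGraph_adj {u v : V} :
    G.triangleGraph.Adj u v ↔ G.Adj u v ∧ ∃ w, G.Adj u w ∧ G.Adj v w :=
  Iff.rfl

lemma triangleGraph_le : G.triangleGraph ≤ G := fun _ _ h => h.1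

lemma exists_triangle_of_clawFree [Finite V] (hcf : ClawFree G) {v : V}
    (hv : 2 < (G.neighborSet v).ncard) : ∃ a b, G.Adj v a ∧ G.Adj v b ∧ G.Adj a b := by
  obtain ⟨a, b, c, ha, hb, hc, hab, hac, hbc⟩ := (two_lt_ncard_iff).1 hv
  by_contra! h
  exact hcf ⟨v, a, b, c, hab, hac, hbc, ha, hb, hc, h a b ha hb, h a c ha hc, h b c hb hc⟩

lemma exists_triangleGraph_adj [Finite V] (hcf : ClawFree G) {v : V}
    (hv : 2 < (G.neighborSet v).ncard) : ∃ s, G.triangleGraph.Adj v s :=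
  let ⟨a, b, ha, hb, hab⟩ := exists_triangle_of_clawFree hcf hv
  ⟨a, triangleGraph_adj.2 ⟨ha, b, hb, hab⟩⟩

/-- A triangle at `w`, which exists by claw-freeness, lies in the component of `w`. -/
lemma ncard_neighborSet_sdiff_supp_lt [Finite V] (hcf : ClawFree G)
    (hcub : ∀ v, (G.neighborSet v).ncard = 3) (C : G.triangleGraph.ConnectedComponent) {w : V}
    (hw : w ∈ C.supp) : (G.neighborSet w \ C.supp).ncard < 2 := by
  obtain ⟨a, b, ha, hb, hab⟩ := exists_triangle_of_clawFree hcf (v := w) (by rw [hcub]; omega)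
  have hmem : ∀ {c}, G.triangleGraph.Adj w c → c ∈ C.supp := fun hc =>
    (ConnectedComponent.connectedComponentMk_eq_of_adj hc).symm.trans hw
  have hin : 1 < (G.neighborSet w ∩ C.supp).ncard :=
    (one_lt_ncard_iff).2 ⟨a, b, ⟨ha, hmem (triangleGraph_adj.2 ⟨ha, b, hb, hab⟩)⟩,
      ⟨hb, hmem (triangleGraph_adj.2 ⟨hb, a, ha, hab.symm⟩)⟩, hab.ne⟩
  have := ncard_inter_add_ncard_sdiff_eq_ncard (G.neighborSet w) C.supp
  have := hcub w
  omega

lemma card_triangleGraph_connectedComponent_le [Finite V] (hcf : ClawFree G)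
    (hcub : ∀ v, (G.neighborSet v).ncard = 3) {q : ℕ∞} {S : Set V}
    (hS : IsSpreadingSet G 2 q S) : Nat.card G.triangleGraph.ConnectedComponent ≤ S.ncard := by
  rw [← Nat.card_coe_set_eq]
  refine Nat.card_le_card_of_surjective (fun s : S => G.triangleGraph.connectedComponentMk s)
    fun C => ?_
  obtain ⟨s, hsS, hsC⟩ :=
    hS.inter_nonempty C.nonempty_supp fun w hw => ncard_neighborSet_sdiff_supp_lt hcf hcub C hw
  exact ⟨⟨s, hsS⟩, hsC⟩

/-- Either the common neighbour of `x` and `u` is already blue, or `x` would have two blue and two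
white neighbours. -/
lemma mem_of_triangleGraph_adj [Finite V] {B : Set V} (hB : spreadStep G 2 2 B ⊆ B)
    {x y u : V} (hx : (G.neighborSet x).ncard ≤ 3) (hxB : x ∈ B) (hyB : y ∈ B)
    (hxy : G.triangleGraph.Adj x y) (hxu : G.triangleGraph.Adj x u) : u ∈ B := by
  obtain ⟨hxy, t, hxt, hyt⟩ := triangleGraph_adj.1 hxy
  obtain ⟨hxu, w, hxw, huw⟩ := triangleGraph_adj.1 hxu
  have htB : t ∈ B := mem_of_spreadStep_subset hB hx hxt.symm hyt.symm hxy.ne hxB hyB hxy hyB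
  by_contra huB
  have hwB : w ∉ B := fun hwB =>
    huB (mem_of_spreadStep_subset hB hx hxu.symm huw hxw.ne hxB hwB hxy hyB)
  have hblue : 1 < (G.neighborSet x ∩ B).ncard :=
    (one_lt_ncard_iff).2 ⟨y, t, ⟨hxy, hyB⟩, ⟨hxt, htB⟩, hyt.ne⟩
  have hwhite : 1 < (G.neighborSet x \ B).ncard :=
    (one_lt_ncard_iff).2 ⟨u, w, ⟨hxu, huB⟩, ⟨hxw, hwB⟩, huw.ne⟩
  have := ncard_inter_add_ncard_sdiff_eq_ncard (G.neighborSet x) B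
  omega

lemma supp_subset_of_triangleGraph_adj [Finite V] (hdeg : ∀ v, (G.neighborSet v).ncard ≤ 3)
    {B : Set V} (hB : spreadStep G 2 2 B ⊆ B) {x y : V} (hxB : x ∈ B) (hyB : y ∈ B)
    (hxy : G.triangleGraph.Adj x y) : (G.triangleGraph.connectedComponentMk x).supp ⊆ B := by
  suffices ∀ {a u} (p : G.triangleGraph.Walk a u), a ∈ B →
      (∃ b ∈ B, G.triangleGraph.Adj a b) → u ∈ B from
    fun u hu => this (ConnectedComponent.exact hu).symm.some hxB ⟨y, hyB, hxy⟩
  intro a u p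
  induction p with
  | nil => exact fun ha _ => ha
  | cons hac _ ih =>
    rintro haB ⟨b, hbB, hab⟩
    exact ih (mem_of_triangleGraph_adj hB (hdeg _) haB hbB hab hac) ⟨_, haB, hac.symm⟩

lemma supp_subset_of_adj_of_supp_subset [Finite V] (hdeg : ∀ v, (G.neighborSet v).ncard ≤ 3)
    {B : Set V} (hB : spreadStep G 2 2 B ⊆ B) {e ℓ s z : V} (heℓ : G.Adj e ℓ)
    (hℓB : (G.triangleGraph.connectedComponentMk ℓ).supp ⊆ B)
    (hℓe : G.triangleGraph.connectedComponentMk ℓ ≠ G.triangleGraph.connectedComponentMk e)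
    (hes : G.triangleGraph.Adj e s) (hsB : s ∈ B) (hℓz : G.triangleGraph.Adj ℓ z) :
    (G.triangleGraph.connectedComponentMk e).supp ⊆ B := by
  have hzB : z ∈ B := hℓB (ConnectedComponent.connectedComponentMk_eq_of_adj hℓz).symm
  have hℓs : ℓ ≠ s := by
    rintro rfl
    exact hℓe (ConnectedComponent.connectedComponentMk_eq_of_adj hes).symm
  have heB : e ∈ B :=
    mem_of_spreadStep_subset hB (hdeg ℓ) heℓ (triangleGraph_le hes) hℓs (hℓB rfl) hsB
      (triangleGraph_le hℓz) hzB
  exact supp_subset_of_triangleGraph_adj hdeg hB heB hsB hes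

lemma Connected.exists_adj_dist_lt (hconn : G.Connected) {u v : V} (huv : u ≠ v) :
    ∃ w, G.Adj u w ∧ G.dist w v < G.dist u v := by
  obtain ⟨p, hp⟩ := hconn.exists_walk_length_eq_dist u v
  cases p with
  | nil => exact absurd rfl huv
  | cons h q => exact ⟨_, h, (dist_le q).trans_lt (by simp [← hp])⟩

end SimpleGraph

theorem exists_isSpreadingSet_two_two_ncard_le [Finite V] {G : SimpleGraph V}
    (hconn : G.Connected) (hcf : ClawFree G) (hcub : ∀ v, (G.neighborSet v).ncard = 3) :
    ∃ T : Set V, IsSpreadingSet G 2 2 T ∧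
      T.ncard ≤ Nat.card G.triangleGraph.ConnectedComponent + 1 := by
  have hdeg : ∀ v, (G.neighborSet v).ncard ≤ 3 := fun v => (hcub v).le
  obtain ⟨v₀⟩ := hconn.nonempty
  choose seed hseed using fun v => exists_triangleGraph_adj hcf (v := v) (by rw [hcub]; omega)
  choose entry hentry hentry_min using fun C : G.triangleGraph.ConnectedComponent =>
    C.supp.exists_min_image (G.dist · v₀) C.supp.toFinite C.nonempty_supp
  refine ⟨insert v₀ (range (seed ∘ entry)), isSpreadingSet_of_forall_closed fun B hTB hB => ?_, ?_⟩
  · suffices h : ∀ n, ∀ C, G.dist (entry C) v₀ = n → C.supp ⊆ B from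
      eq_univ_of_forall fun v => h _ (G.triangleGraph.connectedComponentMk v) rfl rfl
    intro n
    induction n using Nat.strong_induction_on with
    | _ n ih =>
    rintro C rfl
    have hseedB : seed (entry C) ∈ B := hTB (mem_insert_of_mem _ ⟨C, rfl⟩)
    set e := entry C
    rw [← hentry C]
    by_cases h₀ : e = v₀
    · have heB : e ∈ B := by rw [h₀]; exact hTB (mem_insert _ _)
      exact supp_subset_of_triangleGraph_adj hdeg hB heB hseedB (hseed e)
    obtain ⟨ℓ, heℓ, hℓ⟩ := hconn.exists_adj_dist_lt h₀
    have hℓC : G.triangleGraph.connectedComponentMk ℓ ≠ G.triangleGraph.connectedComponentMk e :=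
      fun h => (hentry_min C ℓ (h.trans (hentry C))).not_gt hℓ
    exact supp_subset_of_adj_of_supp_subset hdeg hB heℓ
      (ih _ ((hentry_min _ ℓ rfl).trans_lt hℓ) _ rfl) hℓC (hseed e) hseedB (hseed ℓ)
  · calc (insert v₀ (range (seed ∘ entry))).ncard
        ≤ (range (seed ∘ entry)).ncard + 1 := ncard_insert_le _ _
      _ ≤ Nat.card G.triangleGraph.ConnectedComponent + 1 := by
        rw [← image_univ, ← ncard_univ]
        exact Nat.add_le_add_right (ncard_image_le (toFinite _)) 1

theorem stmt16 {V : Type*} [Fintype V] (G : SimpleGraph V)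
    (hconn : G.Connected) (hcf : ClawFree G)
    (hcub : ∀ v : V, (G.neighborSet v).ncard = 3) :
    spreadNumber G 2 3 ≤ spreadNumber G 2 2 ∧
    spreadNumber G 2 2 ≤ spreadNumber G 2 3 + 1 := by
  refine ⟨spreadNumber_anti_right (by norm_num), ?_⟩
  obtain ⟨S, hScard, hS⟩ := exists_isSpreadingSet_ncard_eq (G := G) (p := 2) (q := 3)
  obtain ⟨T, hT, hTcard⟩ := exists_isSpreadingSet_two_two_ncard_le hconn hcf hcub
  calc spreadNumber G 2 2 ≤ T.ncard := spreadNumber_le hT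
    _ ≤ Nat.card G.triangleGraph.ConnectedComponent + 1 := hTcard
    _ ≤ spreadNumber G 2 3 + 1 :=
      hScard ▸ Nat.add_le_add_right (card_triangleGraph_connectedComponent_le hcf hcub hS) 1
end
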